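/- arXiv:1509.00071 — 6 statements merged into one kernel-verified Lean document; each statement's English description precedes it below -/
import Mathlib

section
/- Let a1 > 1, a2 > 1, d > 0, k > 0, θ ∈ ℝ, and let α > 0, β > 0 be arbitrary constants. Suppose (u, v) is a pair of nonnegative C² functions on ℝ satisfying u'' + θ u' + u(1 − u − a1 v) = 0 and d v'' + θ v' + k v(1 − a2 u − v) = 0 on ℝ, with (u, v)(x) → (1, 0) as x → −∞ and (u, v)(x) → (0, 1) as x → +∞. Then for q(x) = α u(x) + d β v(x), one has min[α/(a2 d), β/a1] · min[1, d²] ≤ q(x) ≤ max[α/d, β] · max[1, d²] for every x ∈ ℝ. -/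
/-!
Put `q = α u + d β v` and `p = α u + β v`. Adding `α` times the first equation to `β` times
the second shows that the flux `q' + θ p` has derivative
`-(α u (1 - u - a1 v) + k β v (1 - a2 u - v))`.
With `m = min (α / (a2 d)) (β / a1)` and `M = max (α / d) β`, the bistable condition makes both
reaction terms nonnegative where `q ≤ d m` (there `a2 u + a1 v ≤ 1`) and nonpositive where
`q ≥ d M` (there `u + v ≥ 1`). Suppose `q` dips below the claimed lower bound, and take a global
minimum `x₀` of `q`. Walking from `x₀` in the direction of `θ` to the first point `a` with
`q a = d m`, the flux decreases, and `q' x₀ = 0 ≤ q' a` gives `p a ≤ p x₀` (for `θ = 0` it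
makes `q` decrease, which is absurd). Since `min 1 d * p ≤ q ≤ max 1 d * p`, this yields
`min 1 d * q a ≤ max 1 d * q x₀`, contradicting `q x₀ < m * min 1 (d ^ 2)`. The upper bound is
the same argument applied to `-q` at a level slightly above `d M`.
-/

open Filter Set Topology

theorem Continuous.exists_first_eq_of_lt_of_le {f : ℝ → ℝ} (hf : Continuous f) {a y L : ℝ}
    (ha : f a < L) (hay : a ≤ y) (hy : L ≤ f y) :
    ∃ b, a < b ∧ f b = L ∧ ∀ x ∈ Icc a b, f x ≤ L := by
  obtain ⟨b, ⟨⟨hab, hby⟩, hLb⟩, hleast⟩ :=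
    (isCompact_Icc.inter_right (isClosed_le continuous_const hf)).exists_isLeast
      (⟨y, ⟨hay, le_rfl⟩, hy⟩ : (Icc a y ∩ {x | L ≤ f x}).Nonempty)
  have hfb : f b = L := by
    obtain ⟨c, hc, hfc⟩ := intermediate_value_Icc hab hf.continuousOn ⟨ha.le, hLb⟩
    have hbc : b ≤ c := hleast ⟨⟨hc.1, hc.2.trans hby⟩, hfc.ge⟩
    rwa [← le_antisymm hc.2 hbc]
  refine ⟨b, lt_of_le_of_ne hab (by rintro rfl; linarith), hfb, fun x hx => ?_⟩
  by_contra! hx'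
  have hbx : b ≤ x := hleast ⟨⟨hx.1, hx.2.trans hby⟩, hx'.le⟩
  rw [le_antisymm hx.2 hbx, hfb] at hx'
  exact lt_irrefl L hx'

theorem HasDerivAt.nonneg_of_le_on_Icc {f : ℝ → ℝ} {f' a b : ℝ} (hf : HasDerivAt f f' b)
    (hab : a < b) (h : ∀ x ∈ Icc a b, f x ≤ f b) : 0 ≤ f' := by
  have hmax : IsLocalMaxOn f (Icc a b) b := IsMaxOn.localize h
  have hcone : a - b ∈ posTangentConeAt (Icc a b) b :=
    sub_mem_posTangentConeAt_of_segment_subset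
      ((convex_Icc a b).segment_subset (right_mem_Icc.2 hab.le) (left_mem_Icc.2 hab.le))
  have := hmax.hasFDerivWithinAt_nonpos hf.hasDerivWithinAt.hasFDerivWithinAt hcone
  simp only [ContinuousLinearMap.toSpanSingleton_apply, smul_eq_mul] at this
  nlinarith

theorem HasDerivAt.comp_neg {f : ℝ → ℝ} {f' x : ℝ} (h : HasDerivAt f f' (-x)) :
    HasDerivAt (fun y => f (-y)) (-f') x := by
  simpa [Function.comp_def] using h.scomp x (hasDerivAt_neg' x)

section FluxComparison

variable {q p q' G' : ℝ → ℝ} {θ L x₀ : ℝ}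

theorem exists_eq_and_le_of_forall_le_of_nonneg
    (hq : ∀ x, HasDerivAt q (q' x) x)
    (hG : ∀ x, HasDerivAt (fun y => q' y + θ * p y) (G' x) x)
    (hG' : ∀ x, q x ≤ L → G' x ≤ 0) (hmin : ∀ x, q x₀ ≤ q x) (hx₀ : q x₀ < L)
    {y : ℝ} (hx₀y : x₀ ≤ y) (hy : L ≤ q y) (hθ : 0 ≤ θ) :
    ∃ a, q a = L ∧ p a ≤ p x₀ := by
  have hqc : Continuous q := continuous_iff_continuousAt.2 fun x => (hq x).continuousAt
  obtain ⟨b, hx₀b, hqb, hle⟩ := hqc.exists_first_eq_of_lt_of_le hx₀ hx₀y hy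
  have hx₀b' : x₀ ∈ Icc x₀ b := left_mem_Icc.2 hx₀b.le
  have hq'x₀ : q' x₀ = 0 :=
    (show IsLocalMin q x₀ from Eventually.of_forall hmin).hasDerivAt_eq_zero (hq x₀)
  have hq'b : 0 ≤ q' b := (hq b).nonneg_of_le_on_Icc hx₀b fun x hx => hqb ▸ hle x hx
  have hanti : AntitoneOn (fun y => q' y + θ * p y) (Icc x₀ b) :=
    antitoneOn_of_hasDerivWithinAt_nonpos (convex_Icc _ _)
      (fun x _ => (hG x).continuousAt.continuousWithinAt) (fun x _ => (hG x).hasDerivWithinAt)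
      fun x hx => hG' x (hle x (interior_subset hx))
  have hflux : ∀ x ∈ Icc x₀ b, q' x + θ * p x ≤ θ * p x₀ := fun x hx => by
    simpa [hq'x₀] using hanti hx₀b' hx hx.1
  rcases hθ.eq_or_lt with rfl | hθ
  · have hqanti : AntitoneOn q (Icc x₀ b) :=
      antitoneOn_of_hasDerivWithinAt_nonpos (convex_Icc _ _)
        (fun x _ => (hq x).continuousAt.continuousWithinAt) (fun x _ => (hq x).hasDerivWithinAt)
        fun x hx => by simpa using hflux x (interior_subset hx)
    have := hqanti hx₀b' (right_mem_Icc.2 hx₀b.le) hx₀b.le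
    linarith
  · refine ⟨b, hqb, le_of_mul_le_mul_left ?_ hθ⟩
    linarith [hflux b (right_mem_Icc.2 hx₀b.le)]

theorem exists_eq_and_le_of_forall_le
    (hq : ∀ x, HasDerivAt q (q' x) x)
    (hG : ∀ x, HasDerivAt (fun y => q' y + θ * p y) (G' x) x)
    (hG' : ∀ x, q x ≤ L → G' x ≤ 0) (hmin : ∀ x, q x₀ ≤ q x) (hx₀ : q x₀ < L)
    (hbot : ∀ᶠ x in atBot, L ≤ q x) (htop : ∀ᶠ x in atTop, L ≤ q x) :
    ∃ a, q a = L ∧ p a ≤ p x₀ := by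
  rcases le_or_gt 0 θ with hθ | hθ
  · obtain ⟨y, hy, hx₀y⟩ := (htop.and (eventually_ge_atTop x₀)).exists
    exact exists_eq_and_le_of_forall_le_of_nonneg hq hG hG' hmin hx₀ hx₀y hy hθ
  · obtain ⟨y, hy, hyx₀⟩ := (hbot.and (eventually_le_atBot x₀)).exists
    -- Reflecting `x ↦ -x` turns `θ` into `-θ` and leaves the flux derivative unchanged.
    have hG_neg : ∀ x, HasDerivAt (fun y => -q' (-y) + -θ * p (-y)) (G' (-x)) x := fun x => by
      have h := (hG (-x)).comp_neg.neg
      rw [neg_neg] at h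
      exact h.congr_of_eventuallyEq <| Eventually.of_forall fun y => by
        simp only [Pi.neg_apply]; ring
    obtain ⟨a, hqa, hpa⟩ := exists_eq_and_le_of_forall_le_of_nonneg
      (q := fun x => q (-x)) (p := fun x => p (-x)) (x₀ := -x₀)
      (fun x => (hq (-x)).comp_neg) hG_neg (fun x => hG' (-x)) (fun x => by simpa using hmin (-x))
      (by simpa using hx₀) (neg_le_neg hyx₀) (by simpa using hy) (by linarith)
    exact ⟨-a, hqa, by simpa using hpa⟩

theorem exists_le_and_eq_and_le_of_lt
    (hq : ∀ x, HasDerivAt q (q' x) x)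
    (hG : ∀ x, HasDerivAt (fun y => q' y + θ * p y) (G' x) x)
    (hG' : ∀ x, q x ≤ L → G' x ≤ 0) {z : ℝ} (hz : q z < L)
    (hbot : ∀ᶠ x in atBot, L ≤ q x) (htop : ∀ᶠ x in atTop, L ≤ q x) :
    ∃ x₀ a, q x₀ ≤ q z ∧ q a = L ∧ p a ≤ p x₀ := by
  have hcocompact : ∀ᶠ x in cocompact ℝ, q z ≤ q x := by
    rw [cocompact_eq_atBot_atTop, eventually_sup]
    exact ⟨hbot.mono fun x hx => hz.le.trans hx, htop.mono fun x hx => hz.le.trans hx⟩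
  have hqc : Continuous q := continuous_iff_continuousAt.2 fun x => (hq x).continuousAt
  obtain ⟨x₀, hmin⟩ := hqc.exists_forall_le' z hcocompact
  obtain ⟨a, hqa, hpa⟩ := exists_eq_and_le_of_forall_le hq hG hG' hmin ((hmin z).trans_lt hz)
    hbot htop
  exact ⟨x₀, a, hmin z, hqa, hpa⟩

theorem exists_ge_and_eq_and_ge_of_gt
    (hq : ∀ x, HasDerivAt q (q' x) x)
    (hG : ∀ x, HasDerivAt (fun y => q' y + θ * p y) (G' x) x)
    (hG' : ∀ x, L ≤ q x → 0 ≤ G' x) {z : ℝ} (hz : L < q z)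
    (hbot : ∀ᶠ x in atBot, q x ≤ L) (htop : ∀ᶠ x in atTop, q x ≤ L) :
    ∃ x₀ a, q z ≤ q x₀ ∧ q a = L ∧ p x₀ ≤ p a := by
  have hG_neg : ∀ x, HasDerivAt (fun y => -q' y + θ * -p y) (-G' x) x := fun x =>
    (hG x).neg.congr_of_eventuallyEq <| Eventually.of_forall fun y => by
      simp only [Pi.neg_apply]; ring
  obtain ⟨x₀, a, hx₀, hqa, hpa⟩ :=
    exists_le_and_eq_and_le_of_lt (q := -q) (p := -p) (L := -L)
      (fun x => (hq x).neg) hG_neg (fun x hx => neg_nonpos.2 (hG' x (by simpa using hx)))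
      (by simpa using hz) (hbot.mono fun x hx => by simpa using hx)
      (htop.mono fun x hx => by simpa using hx)
  exact ⟨x₀, a, by simpa using hx₀, by simpa using hqa, by simpa using hpa⟩

end FluxComparison

section Reaction

variable {a1 a2 d k α β u v : ℝ}

theorem reaction_nonneg_of_le_one (ha1 : 1 ≤ a1) (ha2 : 1 ≤ a2) (hα : 0 ≤ α)
    (hkβ : 0 ≤ k * β) (hu : 0 ≤ u) (hv : 0 ≤ v) (h : a2 * u + a1 * v ≤ 1) :
    0 ≤ α * (u * (1 - u - a1 * v)) + k * β * (v * (1 - a2 * u - v)) := by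
  have hf : 0 ≤ 1 - u - a1 * v := by nlinarith
  have hg : 0 ≤ 1 - a2 * u - v := by nlinarith
  positivity

theorem reaction_nonpos_of_one_le (ha1 : 1 ≤ a1) (ha2 : 1 ≤ a2) (hα : 0 ≤ α)
    (hkβ : 0 ≤ k * β) (hu : 0 ≤ u) (hv : 0 ≤ v) (h : 1 ≤ u + v) :
    α * (u * (1 - u - a1 * v)) + k * β * (v * (1 - a2 * u - v)) ≤ 0 := by
  have hf : 1 - u - a1 * v ≤ 0 := by nlinarith
  have hg : 1 - a2 * u - v ≤ 0 := by nlinarith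
  have h1 : α * (u * (1 - u - a1 * v)) ≤ 0 :=
    mul_nonpos_of_nonneg_of_nonpos hα (mul_nonpos_of_nonneg_of_nonpos hu hf)
  have h2 : k * β * (v * (1 - a2 * u - v)) ≤ 0 :=
    mul_nonpos_of_nonneg_of_nonpos hkβ (mul_nonpos_of_nonneg_of_nonpos hv hg)
  linarith

theorem add_le_one_of_le_mul_min (ha1 : 0 < a1) (ha2 : 0 < a2) (hd : 0 < d) (hα : 0 < α)
    (hβ : 0 < β) (hu : 0 ≤ u) (hv : 0 ≤ v)
    (h : α * u + d * β * v ≤ d * min (α / (a2 * d)) (β / a1)) : a2 * u + a1 * v ≤ 1 := by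
  set m := min (α / (a2 * d)) (β / a1)
  have hm : 0 < m := lt_min (by positivity) (by positivity)
  have hmα : m * (a2 * d) ≤ α := (le_div_iff₀ (by positivity)).1 (min_le_left _ _)
  have hmβ : m * a1 ≤ β := (le_div_iff₀ ha1).1 (min_le_right _ _)
  have hαu : m * (a2 * d) * u ≤ α * u := mul_le_mul_of_nonneg_right hmα hu
  have hβv : d * (m * a1) * v ≤ d * β * v :=
    mul_le_mul_of_nonneg_right (mul_le_mul_of_nonneg_left hmβ hd.le) hv
  have : d * m * (a2 * u + a1 * v) ≤ d * m * 1 := by linarith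
  exact le_of_mul_le_mul_left this (by positivity)

theorem one_le_add_of_mul_max_le (hd : 0 < d) (hβ : 0 < β) (hu : 0 ≤ u) (hv : 0 ≤ v)
    (h : d * max (α / d) β ≤ α * u + d * β * v) : 1 ≤ u + v := by
  set M := max (α / d) β
  have hM : 0 < M := hβ.trans_le (le_max_right _ _)
  have hMα : α ≤ d * M := by rw [mul_comm, ← div_le_iff₀ hd]; exact le_max_left _ _
  have hMβ : β ≤ M := le_max_right _ _
  have hαu : α * u ≤ d * M * u := mul_le_mul_of_nonneg_right hMα hu
  have hβv : d * β * v ≤ d * M * v :=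
    mul_le_mul_of_nonneg_right (mul_le_mul_of_nonneg_left hMβ hd.le) hv
  have : d * M * 1 ≤ d * M * (u + v) := by linarith
  exact le_of_mul_le_mul_left this (by positivity)

theorem min_one_mul_le_max_one_mul {u' v' : ℝ} (hd : 0 ≤ d) (hα : 0 ≤ α) (hβ : 0 ≤ β)
    (hu : 0 ≤ u) (hv : 0 ≤ v) (hu' : 0 ≤ u') (hv' : 0 ≤ v')
    (h : α * u + β * v ≤ α * u' + β * v') :
    min 1 d * (α * u + d * β * v) ≤ max 1 d * (α * u' + d * β * v') := by
  rcases le_total d 1 with hd1 | hd1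
  · rw [min_eq_right hd1, max_eq_left hd1]
    nlinarith [mul_nonneg hα hu', mul_nonneg hβ hv, mul_nonneg hd (mul_nonneg hβ hv)]
  · rw [min_eq_left hd1, max_eq_right hd1]
    nlinarith [mul_nonneg (sub_nonneg.2 hd1) (mul_nonneg hα hu), mul_le_mul_of_nonneg_left h hd,
      mul_nonneg (mul_nonneg hd (sub_nonneg.2 hd1)) (mul_nonneg hβ hv')]

theorem max_one_mul_min_one_sq (hd : 0 ≤ d) : max 1 d * min 1 (d ^ 2) = d * min 1 d := by
  rcases le_total d 1 with hd1 | hd1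
  · rw [max_eq_left hd1, min_eq_right hd1, min_eq_right (by nlinarith)]; ring
  · rw [max_eq_right hd1, min_eq_left hd1, min_eq_left (by nlinarith)]

theorem min_one_mul_max_one_sq (hd : 0 ≤ d) : min 1 d * max 1 (d ^ 2) = d * max 1 d := by
  rcases le_total d 1 with hd1 | hd1
  · rw [max_eq_left hd1, min_eq_right hd1, max_eq_left (by nlinarith)]
  · rw [max_eq_right hd1, min_eq_left hd1, max_eq_right (by nlinarith)]; ring

theorem min_one_sq_le_self (hd : 0 ≤ d) : min 1 (d ^ 2) ≤ d := by
  rcases le_total d 1 with hd1 | hd1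
  · exact (min_le_right _ _).trans (by nlinarith)
  · exact (min_le_left _ _).trans hd1

end Reaction

structure IsLotkaVolterraWave (a1 a2 d k θ : ℝ) (u v : ℝ → ℝ) : Prop where
  contDiff_u : ContDiff ℝ 2 u
  contDiff_v : ContDiff ℝ 2 v
  nonneg_u : ∀ x, 0 ≤ u x
  nonneg_v : ∀ x, 0 ≤ v x
  ode_u : ∀ x, deriv (deriv u) x + θ * deriv u x + u x * (1 - u x - a1 * v x) = 0
  ode_v : ∀ x, d * deriv (deriv v) x + θ * deriv v x + k * v x * (1 - a2 * u x - v x) = 0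
  tendsto_u_atBot : Tendsto u atBot (𝓝 1)
  tendsto_v_atBot : Tendsto v atBot (𝓝 0)
  tendsto_u_atTop : Tendsto u atTop (𝓝 0)
  tendsto_v_atTop : Tendsto v atTop (𝓝 1)

namespace IsLotkaVolterraWave

variable {a1 a2 d k θ : ℝ} {u v : ℝ → ℝ}

theorem hasDerivAt_weighted (hw : IsLotkaVolterraWave a1 a2 d k θ u v) (α β x : ℝ) :
    HasDerivAt (fun y => α * u y + d * β * v y) (α * deriv u x + d * β * deriv v x) x :=
  ((hw.contDiff_u.differentiable two_ne_zero x).hasDerivAt.const_mul α).add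
    ((hw.contDiff_v.differentiable two_ne_zero x).hasDerivAt.const_mul (d * β))

theorem hasDerivAt_flux (hw : IsLotkaVolterraWave a1 a2 d k θ u v) (α β x : ℝ) :
    HasDerivAt (fun y => (α * deriv u y + d * β * deriv v y) + θ * (α * u y + β * v y))
      (-(α * (u x * (1 - u x - a1 * v x)) + k * β * (v x * (1 - a2 * u x - v x)))) x := by
  have hu' := (hw.contDiff_u.differentiable two_ne_zero x).hasDerivAt
  have hv' := (hw.contDiff_v.differentiable two_ne_zero x).hasDerivAt
  have hu'' := (hw.contDiff_u.differentiable_deriv_two x).hasDerivAt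
  have hv'' := (hw.contDiff_v.differentiable_deriv_two x).hasDerivAt
  refine (((hu''.const_mul α).add (hv''.const_mul (d * β))).add
    (((hu'.const_mul α).add (hv'.const_mul β)).const_mul θ)).congr_deriv ?_
  linear_combination α * hw.ode_u x + β * hw.ode_v x

theorem tendsto_weighted_atBot (hw : IsLotkaVolterraWave a1 a2 d k θ u v) (α β : ℝ) :
    Tendsto (fun y => α * u y + d * β * v y) atBot (𝓝 α) := by
  simpa using (hw.tendsto_u_atBot.const_mul α).add (hw.tendsto_v_atBot.const_mul (d * β))

theorem tendsto_weighted_atTop (hw : IsLotkaVolterraWave a1 a2 d k θ u v) (α β : ℝ) :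
    Tendsto (fun y => α * u y + d * β * v y) atTop (𝓝 (d * β)) := by
  simpa using (hw.tendsto_u_atTop.const_mul α).add (hw.tendsto_v_atTop.const_mul (d * β))

theorem min_mul_min_le_weighted (hw : IsLotkaVolterraWave a1 a2 d k θ u v) {α β : ℝ}
    (ha1 : 1 < a1) (ha2 : 1 < a2) (hd : 0 < d) (hk : 0 ≤ k) (hα : 0 < α) (hβ : 0 < β)
    (x : ℝ) :
    min (α / (a2 * d)) (β / a1) * min 1 (d ^ 2) ≤ α * u x + d * β * v x := by
  set m := min (α / (a2 * d)) (β / a1)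
  have hm : 0 < m := lt_min (by positivity) (by positivity)
  have hdmα : d * m < α := by
    have : m * (a2 * d) ≤ α := (le_div_iff₀ (by positivity)).1 (min_le_left _ _)
    nlinarith [mul_pos hd hm]
  have hdmβ : d * m < d * β := by
    have : m * a1 ≤ β := (le_div_iff₀ (by positivity)).1 (min_le_right _ _)
    nlinarith [mul_pos hd hm]
  have hsign : ∀ y, α * u y + d * β * v y ≤ d * m →
      -(α * (u y * (1 - u y - a1 * v y)) + k * β * (v y * (1 - a2 * u y - v y))) ≤ 0 :=
    fun y hy => neg_nonpos.2 <| reaction_nonneg_of_le_one ha1.le ha2.le hα.le (by positivity)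
      (hw.nonneg_u y) (hw.nonneg_v y)
      (add_le_one_of_le_mul_min (by positivity) (by positivity) hd hα hβ
        (hw.nonneg_u y) (hw.nonneg_v y) hy)
  by_contra! hx
  have hxL : α * u x + d * β * v x < d * m :=
    hx.trans_le <| (mul_le_mul_of_nonneg_left (min_one_sq_le_self hd.le) hm.le).trans_eq
      (mul_comm m d)
  obtain ⟨x₀, a, hx₀, hqa, hpa⟩ := exists_le_and_eq_and_le_of_lt
    (p := fun y => α * u y + β * v y) (hw.hasDerivAt_weighted α β) (hw.hasDerivAt_flux α β)
    hsign hxL ((hw.tendsto_weighted_atBot α β).eventually (eventually_ge_nhds hdmα))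
    ((hw.tendsto_weighted_atTop α β).eventually (eventually_ge_nhds hdmβ))
  have key := min_one_mul_le_max_one_mul hd.le hα.le hβ.le (hw.nonneg_u a) (hw.nonneg_v a)
    (hw.nonneg_u x₀) (hw.nonneg_v x₀) hpa
  have hx₀' :=
    mul_lt_mul_of_pos_left (hx₀.trans_lt hx) (lt_max_of_lt_left one_pos : 0 < max 1 d)
  rw [mul_left_comm, max_one_mul_min_one_sq hd.le] at hx₀'
  rw [hqa] at key
  linarith

theorem weighted_le_max_mul_max (hw : IsLotkaVolterraWave a1 a2 d k θ u v) {α β : ℝ}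
    (ha1 : 1 ≤ a1) (ha2 : 1 ≤ a2) (hd : 0 < d) (hk : 0 ≤ k) (hα : 0 ≤ α) (hβ : 0 < β)
    (x : ℝ) :
    α * u x + d * β * v x ≤ max (α / d) β * max 1 (d ^ 2) := by
  set M := max (α / d) β
  have hM : 0 < M := hβ.trans_le (le_max_right _ _)
  have hdMα : α ≤ d * M := by rw [mul_comm, ← div_le_iff₀ hd]; exact le_max_left _ _
  have hdMβ : d * β ≤ d * M := mul_le_mul_of_nonneg_left (le_max_right _ _) hd.le
  have hmin : 0 < min 1 d := lt_min one_pos hd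
  have hmax : 0 < max 1 d := lt_max_of_lt_left one_pos
  by_contra! hx
  -- The level must lie strictly above `d * M`, so that `q` stays below it near `±∞`.
  have hgap : d * M * max 1 d < min 1 d * (α * u x + d * β * v x) :=
    calc d * M * max 1 d = min 1 d * (M * max 1 (d ^ 2)) := by
          rw [mul_left_comm, min_one_mul_max_one_sq hd.le]; ring
      _ < min 1 d * (α * u x + d * β * v x) := mul_lt_mul_of_pos_left hx hmin
  obtain ⟨L, hML, hLx⟩ := exists_between ((lt_div_iff₀ hmax).2 hgap)
  rw [lt_div_iff₀ hmax] at hLx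
  have hLq : L < α * u x + d * β * v x := by
    have hqx : 0 < α * u x + d * β * v x := (mul_pos hM (lt_max_of_lt_left one_pos)).trans hx
    have := mul_le_mul_of_nonneg_right (min_le_max : min 1 d ≤ max 1 d) hqx.le
    exact lt_of_mul_lt_mul_right (by linarith) hmax.le
  have hsign : ∀ y, L ≤ α * u y + d * β * v y →
      0 ≤ -(α * (u y * (1 - u y - a1 * v y)) + k * β * (v y * (1 - a2 * u y - v y))) :=
    fun y hy => neg_nonneg.2 <| reaction_nonpos_of_one_le ha1 ha2 hα (by positivity)
      (hw.nonneg_u y) (hw.nonneg_v y)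
      (one_le_add_of_mul_max_le hd hβ (hw.nonneg_u y) (hw.nonneg_v y) (hML.le.trans hy))
  obtain ⟨x₀, a, hx₀, hqa, hpa⟩ := exists_ge_and_eq_and_ge_of_gt
    (p := fun y => α * u y + β * v y) (hw.hasDerivAt_weighted α β) (hw.hasDerivAt_flux α β)
    hsign hLq
    ((hw.tendsto_weighted_atBot α β).eventually (eventually_le_nhds (hdMα.trans_lt hML)))
    ((hw.tendsto_weighted_atTop α β).eventually (eventually_le_nhds (hdMβ.trans_lt hML)))
  have key := min_one_mul_le_max_one_mul hd.le hα hβ.le (hw.nonneg_u x₀) (hw.nonneg_v x₀)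
    (hw.nonneg_u a) (hw.nonneg_v a) hpa
  rw [hqa] at key
  linarith [mul_le_mul_of_nonneg_left hx₀ hmin.le]

end IsLotkaVolterraWave

/-- Maximum principle for `q(x) = α u(x) + d β v(x)` for the scaled two-species
Lotka-Volterra traveling-wave system under the bistable condition. -/
theorem lv_max_principle_q
    (a1 a2 d k θ α β : ℝ)
    (ha1 : 1 < a1) (ha2 : 1 < a2) (hd : 0 < d) (hk : 0 < k)
    (hα : 0 < α) (hβ : 0 < β)
    (u v : ℝ → ℝ)
    (hu : ContDiff ℝ 2 u) (hv : ContDiff ℝ 2 v)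
    (hu0 : ∀ x, 0 ≤ u x) (hv0 : ∀ x, 0 ≤ v x)
    (hequ : ∀ x, deriv (deriv u) x + θ * deriv u x
      + u x * (1 - u x - a1 * v x) = 0)
    (heqv : ∀ x, d * deriv (deriv v) x + θ * deriv v x
      + k * v x * (1 - a2 * u x - v x) = 0)
    (huM : Tendsto u atBot (nhds 1)) (hvM : Tendsto v atBot (nhds 0))
    (huP : Tendsto u atTop (nhds 0)) (hvP : Tendsto v atTop (nhds 1)) :
    ∀ x : ℝ,
      min (α / (a2 * d)) (β / a1) * min 1 (d ^ 2) ≤ α * u x + d * β * v x ∧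
      α * u x + d * β * v x ≤ max (α / d) β * max 1 (d ^ 2) := by
  have hw : IsLotkaVolterraWave a1 a2 d k θ u v :=
    ⟨hu, hv, hu0, hv0, hequ, heqv, huM, hvM, huP, hvP⟩
  exact fun x => ⟨hw.min_mul_min_le_weighted ha1 ha2 hd hk.le hα hβ x,
    hw.weighted_le_max_mul_max ha1.le ha2.le hd hk.le hα.le hβ x⟩
end

section
/- Let a1 > 1, a2 > 1, d > 0, k > 0, θ ∈ ℝ, and let α > 0, β > 0 be arbitrary constants. Suppose (u, v) is a pair of nonnegative C² functions on ℝ satisfying the differential inequalities u'' + θ u' + u(1 − u − a1 v) ≤ 0 and d v'' + θ v' + k v(1 − a2 u − v) ≤ 0 on ℝ, with (u, v)(x) → (1, 0) as x → −∞ and (u, v)(x) → (0, 1) as x → +∞. Then q(x) = α u(x) + d β v(x) satisfies q(x) ≥ min[α/(a2 d), β/a1] · min[1, d²] for every x ∈ ℝ. -/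
open Filter Set

set_option maxHeartbeats 1600000 in
/-- Core lemma: the case `θ ≥ 0`, `d ≥ 1`, with general nonnegative reaction
coefficients `k1, k2` and tail hypotheses expressed as eventual lower bounds. -/
theorem lv_core
    (a1 a2 d k1 k2 θ α β : ℝ)
    (ha1 : 1 < a1) (ha2 : 1 < a2) (hd : 1 ≤ d) (hθ : 0 ≤ θ)
    (hk1 : 0 ≤ k1) (hk2 : 0 ≤ k2) (hα : 0 < α) (hβ : 0 < β)
    (u v : ℝ → ℝ)
    (hu : ContDiff ℝ 2 u) (hv : ContDiff ℝ 2 v)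
    (hu0 : ∀ x, 0 ≤ u x) (hv0 : ∀ x, 0 ≤ v x)
    (hequ : ∀ x, deriv (deriv u) x + θ * deriv u x
      + k1 * u x * (1 - u x - a1 * v x) ≤ 0)
    (heqv : ∀ x, d * deriv (deriv v) x + θ * deriv v x
      + k2 * v x * (1 - a2 * u x - v x) ≤ 0)
    (hbot : ∀ᶠ x in atBot, min (α / a2) (d * β / a1) ≤ α * u x + d * β * v x)
    (htop : ∀ᶠ x in atTop, min (α / a2) (d * β / a1) ≤ α * u x + d * β * v x) :
    ∀ x, min (α / (a2 * d)) (β / a1) ≤ α * u x + d * β * v x := by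
  have hd0 : (0:ℝ) < d := lt_of_lt_of_le one_pos hd
  have ha10 : (0:ℝ) < a1 := lt_trans one_pos ha1
  have ha20 : (0:ℝ) < a2 := lt_trans one_pos ha2
  set C : ℝ := min (α / a2) (d * β / a1) with hCdef
  set c : ℝ := min (α / (a2 * d)) (β / a1) with hcdef
  have hC0 : 0 < C := lt_min (by positivity) (by positivity)
  have hc0 : 0 < c := lt_min (by positivity) (by positivity)
  have hcdC : c * d ≤ C := by
    refine le_min ?_ ?_
    · have h1 : c ≤ α / (a2 * d) := min_le_left _ _
      have h2 : α / (a2 * d) * d = α / a2 := by field_simp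
      nlinarith [mul_le_mul_of_nonneg_right h1 hd0.le]
    · have h1 : c ≤ β / a1 := min_le_right _ _
      have h2 : β / a1 * d = d * β / a1 := by ring
      nlinarith [mul_le_mul_of_nonneg_right h1 hd0.le]
  have hcCd : c ≤ C / d := (le_div_iff₀ hd0).mpr hcdC
  have hcC : c ≤ C := le_trans hcCd (div_le_self hC0.le hd)
  -- differentiability facts
  have htwo : ((1:WithTop ℕ∞) + 1) = 2 := by norm_num
  have hu11 : ContDiff ℝ ((1:WithTop ℕ∞)+1) u := by rw [htwo]; exact hu
  have hv11 : ContDiff ℝ ((1:WithTop ℕ∞)+1) v := by rw [htwo]; exact hv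
  have hud : Differentiable ℝ u := hu.differentiable (by norm_num)
  have hvd : Differentiable ℝ v := hv.differentiable (by norm_num)
  have hud' : Differentiable ℝ (deriv u) :=
    ((contDiff_succ_iff_deriv.mp hu11).2.2).differentiable one_ne_zero
  have hvd' : Differentiable ℝ (deriv v) :=
    ((contDiff_succ_iff_deriv.mp hv11).2.2).differentiable one_ne_zero
  have Hu : ∀ x, HasDerivAt u (deriv u x) x := fun x => (hud x).hasDerivAt
  have Hv : ∀ x, HasDerivAt v (deriv v x) x := fun x => (hvd x).hasDerivAt
  have Hu' : ∀ x, HasDerivAt (deriv u) (deriv (deriv u) x) x := fun x => (hud' x).hasDerivAt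
  have Hv' : ∀ x, HasDerivAt (deriv v) (deriv (deriv v) x) x := fun x => (hvd' x).hasDerivAt
  set q : ℝ → ℝ := fun x => α * u x + d * β * v x with hqdef
  have Hq : ∀ x, HasDerivAt q (α * deriv u x + d * β * deriv v x) x :=
    fun x => ((Hu x).const_mul α).add ((Hv x).const_mul (d * β))
  have hqcont : Continuous q :=
    (continuous_const.mul hu.continuous).add (continuous_const.mul hv.continuous)
  by_contra hcon
  push_neg at hcon
  obtain ⟨z, hz⟩ := hcon
  have hz' : q z < c := hz
  obtain ⟨R1, hR1⟩ := eventually_atBot.mp hbot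
  obtain ⟨R2, hR2⟩ := eventually_atTop.mp htop
  set lo := min R1 z with hlodef
  set hi := max R2 z with hhidef
  have hlohi : lo ≤ hi := le_trans (min_le_right _ _) (le_max_right _ _)
  obtain ⟨x0, hx0mem, hx0min⟩ :=
    isCompact_Icc.exists_isMinOn (Set.nonempty_Icc.mpr hlohi) hqcont.continuousOn
  have hzmem : z ∈ Icc lo hi := ⟨min_le_right _ _, le_max_right _ _⟩
  have hmin' : ∀ y ∈ Icc lo hi, q x0 ≤ q y := fun y hy => isMinOn_iff.mp hx0min y hy
  set m := q x0 with hmdef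
  have hmc : m < c := lt_of_le_of_lt (hmin' z hzmem) hz'
  have hglob : ∀ y, m ≤ q y := by
    intro y
    rcases le_or_gt lo y with h1 | h1
    · rcases le_or_gt y hi with h2 | h2
      · exact hmin' y ⟨h1, h2⟩
      · have hy : C ≤ q y := hR2 y (le_trans (le_max_left _ _) h2.le)
        linarith
    · have hy : C ≤ q y := hR1 y (le_trans h1.le (min_le_left _ _))
      linarith
  have hlocal : IsLocalMin q x0 := Filter.Eventually.of_forall hglob
  have hd0q : deriv q x0 = 0 := hlocal.deriv_eq_zero
  have hsum0 : α * deriv u x0 + d * β * deriv v x0 = 0 := by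
    rw [← (Hq x0).deriv]; exact hd0q
  -- the first point to the right of x0 where q reaches C
  set S : Set ℝ := {y | x0 ≤ y ∧ C ≤ q y} with hSdef
  have hSclosed : IsClosed S := by
    have : S = {y | x0 ≤ y} ∩ {y | C ≤ q y} := rfl
    rw [this]
    exact (isClosed_le continuous_const continuous_id).inter
      (isClosed_le continuous_const hqcont)
  have hSne : S.Nonempty := ⟨max x0 R2, le_max_left _ _, hR2 _ (le_max_right _ _)⟩
  have hSbdd : BddBelow S := ⟨x0, fun y hy => hy.1⟩
  set b := sInf S with hbdef
  have hbS : b ∈ S := hSclosed.csInf_mem hSne hSbdd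
  have hx0b : x0 < b := by
    rcases lt_or_eq_of_le hbS.1 with h | h
    · exact h
    · exfalso
      have h2 := hbS.2
      rw [← h] at h2
      linarith
  have hltC : ∀ y, x0 ≤ y → y < b → q y < C := by
    intro y h1 h2
    by_contra h3
    exact notMem_of_lt_csInf h2 hSbdd ⟨h1, not_lt.mp h3⟩
  -- nonnegativity of the reaction brackets where q < C
  have hCα : C ≤ α := le_trans (min_le_left _ _) (div_le_self hα.le ha2.le)
  have hCβ : C ≤ d * β := le_trans (min_le_right _ _) (div_le_self (by positivity) ha1.le)
  have hB1 : ∀ y, q y < C → 0 ≤ 1 - u y - a1 * v y := by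
    intro y hy
    by_contra h
    push_neg at h
    have h2 : C ≤ d * β / a1 := min_le_right _ _
    have e1 : C * u y ≤ α * u y := mul_le_mul_of_nonneg_right hCα (hu0 y)
    have e2 : C * (a1 * v y) ≤ d * β / a1 * (a1 * v y) :=
      mul_le_mul_of_nonneg_right h2 (mul_nonneg ha10.le (hv0 y))
    have e3 : d * β / a1 * (a1 * v y) = d * β * v y := by field_simp
    have e4 : C * 1 ≤ C * (u y + a1 * v y) :=
      mul_le_mul_of_nonneg_left (by linarith) hC0.le
    have e5 : C * (u y + a1 * v y) = C * u y + C * (a1 * v y) := by ring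
    have e6 : q y = α * u y + d * β * v y := rfl
    simp only [mul_one] at e4
    linarith
  have hB2 : ∀ y, q y < C → 0 ≤ 1 - a2 * u y - v y := by
    intro y hy
    by_contra h
    push_neg at h
    have h1 : C ≤ α / a2 := min_le_left _ _
    have e1 : C * (a2 * u y) ≤ α / a2 * (a2 * u y) :=
      mul_le_mul_of_nonneg_right h1 (mul_nonneg ha20.le (hu0 y))
    have e2 : α / a2 * (a2 * u y) = α * u y := by field_simp
    have e3 : C * v y ≤ d * β * v y := mul_le_mul_of_nonneg_right hCβ (hv0 y)
    have e4 : C * 1 ≤ C * (a2 * u y + v y) :=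
      mul_le_mul_of_nonneg_left (by linarith) hC0.le
    have e5 : C * (a2 * u y + v y) = C * (a2 * u y) + C * v y := by ring
    have e6 : q y = α * u y + d * β * v y := rfl
    simp only [mul_one] at e4
    linarith
  -- the monotone quantity F
  set F : ℝ → ℝ := fun x => α * deriv u x + d * β * deriv v x + θ * (α * u x + β * v x)
    with hFdef
  have HF : ∀ x, HasDerivAt F
      (α * deriv (deriv u) x + d * β * deriv (deriv v) x
        + θ * (α * deriv u x + β * deriv v x)) x :=
    fun x => (((Hu' x).const_mul α).add ((Hv' x).const_mul (d*β))).add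
      ((((Hu x).const_mul α).add ((Hv x).const_mul β)).const_mul θ)
  have hFdiff : Differentiable ℝ F := fun x => (HF x).differentiableAt
  have hFanti : AntitoneOn F (Icc x0 b) := by
    apply antitoneOn_of_deriv_nonpos (convex_Icc _ _) hFdiff.continuous.continuousOn
      hFdiff.differentiableOn
    intro x hx
    rw [interior_Icc] at hx
    have hqx : q x < C := hltC x hx.1.le hx.2
    have b1 := hB1 x hqx
    have b2 := hB2 x hqx
    rw [(HF x).deriv]
    have i1 := hequ x
    have i2 := heqv x
    nlinarith [mul_le_mul_of_nonneg_left i1 hα.le, mul_le_mul_of_nonneg_left i2 hβ.le,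
      mul_nonneg (mul_nonneg (mul_nonneg hα.le hk1) (hu0 x)) b1,
      mul_nonneg (mul_nonneg (mul_nonneg hβ.le hk2) (hv0 x)) b2]
  -- the comparison function G
  set K : ℝ := (d - 1) * C / d with hKdef
  have hK0 : 0 ≤ K := div_nonneg (mul_nonneg (by linarith) hC0.le) hd0.le
  have HE : ∀ x : ℝ, HasDerivAt (fun y => Real.exp (θ * y)) (Real.exp (θ * x) * θ) x := by
    intro x
    have h : HasDerivAt (fun y : ℝ => θ * y) θ x := by
      simpa using (hasDerivAt_id x).const_mul θ
    simpa using h.exp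
  set G : ℝ → ℝ := fun y => Real.exp (θ * y) * (q y - m) - K * Real.exp (θ * y) with hGdef
  have HG : ∀ x, HasDerivAt G
      (Real.exp (θ * x) * θ * (q x - m)
        + Real.exp (θ * x) * (α * deriv u x + d * β * deriv v x)
        - K * (Real.exp (θ * x) * θ)) x :=
    fun x => (((HE x).mul ((Hq x).sub_const m)).sub ((HE x).const_mul K))
  have hGdiff : Differentiable ℝ G := fun x => (HG x).differentiableAt
  have hGanti : AntitoneOn G (Icc x0 b) := by
    apply antitoneOn_of_deriv_nonpos (convex_Icc _ _) hGdiff.continuous.continuousOn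
      hGdiff.differentiableOn
    intro x hx
    rw [interior_Icc] at hx
    rw [(HG x).deriv]
    have hqx : q x < C := hltC x hx.1.le hx.2
    have hFle : F x ≤ F x0 := hFanti (left_mem_Icc.mpr hx0b.le) ⟨hx.1.le, hx.2.le⟩ hx.1.le
    have hFx : F x = α * deriv u x + d * β * deriv v x + θ * (α * u x + β * v x) := rfl
    have hFx0 : F x0 = α * deriv u x0 + d * β * deriv v x0 + θ * (α * u x0 + β * v x0) := rfl
    have hqxv : q x = α * u x + d * β * v x := rfl
    have hqx0v : m = α * u x0 + d * β * v x0 := rfl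
    have h1 : α * deriv u x + d * β * deriv v x
        ≤ θ * (α * u x0 + β * v x0) - θ * (α * u x + β * v x) := by
      rw [hFx, hFx0] at hFle
      linarith
    have h3 : θ * (q x - m) + (θ * (α * u x0 + β * v x0) - θ * (α * u x + β * v x))
        = θ * ((d-1) * (β * v x)) - θ * ((d-1) * (β * v x0)) := by
      rw [hqxv, hqx0v]; ring
    have hkey : θ * (q x - m) + (α * deriv u x + d * β * deriv v x)
        ≤ θ * ((d-1) * (β * v x)) - θ * ((d-1) * (β * v x0)) := by linarith
    have hvx : d * β * v x ≤ C := by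
      have h4 : 0 ≤ α * u x := mul_nonneg hα.le (hu0 x)
      rw [hqxv] at hqx
      linarith
    have hbv : θ * ((d-1) * (β * v x)) ≤ θ * ((d-1) * (C / d)) := by
      apply mul_le_mul_of_nonneg_left _ hθ
      apply mul_le_mul_of_nonneg_left _ (by linarith : (0:ℝ) ≤ d - 1)
      rw [le_div_iff₀ hd0]
      nlinarith
    have hv0' : 0 ≤ θ * ((d-1) * (β * v x0)) :=
      mul_nonneg hθ (mul_nonneg (by linarith) (mul_nonneg hβ.le (hv0 x0)))
    have hKθ : θ * ((d-1) * (C / d)) = K * θ := by rw [hKdef]; ring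
    have hmain : θ * (q x - m) + (α * deriv u x + d * β * deriv v x) - K * θ ≤ 0 := by
      linarith
    have hE : (0:ℝ) < Real.exp (θ * x) := Real.exp_pos _
    nlinarith [mul_le_mul_of_nonneg_left hmain hE.le]
  -- conclude
  have hGb : G b ≤ G x0 := hGanti (left_mem_Icc.mpr hx0b.le) (right_mem_Icc.mpr hx0b.le) hx0b.le
  have hGbv : G b = Real.exp (θ*b) * (q b - m) - K * Real.exp (θ*b) := rfl
  have hGx0 : G x0 = Real.exp (θ*x0) * (q x0 - m) - K * Real.exp (θ*x0) := rfl
  have hEb : (0:ℝ) < Real.exp (θ*b) := Real.exp_pos _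
  have hEx0 : (0:ℝ) < Real.exp (θ*x0) := Real.exp_pos _
  have hqb : C ≤ q b := hbS.2
  have hq0 : q x0 - m = 0 := by rw [hmdef]; ring
  have t1 : Real.exp (θ*b) * (C - m) ≤ Real.exp (θ*b) * (q b - m) :=
    mul_le_mul_of_nonneg_left (by linarith) hEb.le
  have t2 : Real.exp (θ*b) * (q b - m) ≤ K * Real.exp (θ*b) - K * Real.exp (θ*x0) := by
    rw [hGbv, hGx0, hq0] at hGb
    linarith
  have t3 : 0 ≤ K * Real.exp (θ*x0) := mul_nonneg hK0 hEx0.le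
  have t4 : Real.exp (θ*b) * (C - m) ≤ Real.exp (θ*b) * K := by linarith
  have t5 : C - m ≤ K := le_of_mul_le_mul_left t4 hEb
  have hfin : C - K = C / d := by
    rw [hKdef]
    field_simp
    ring
  linarith

/-- Intermediate lemma: drop the sign condition on `θ` (via reflection `x ↦ -x`). -/
theorem lv_core2
    (a1 a2 d k1 k2 θ α β : ℝ)
    (ha1 : 1 < a1) (ha2 : 1 < a2) (hd : 1 ≤ d)
    (hk1 : 0 ≤ k1) (hk2 : 0 ≤ k2) (hα : 0 < α) (hβ : 0 < β)
    (u v : ℝ → ℝ)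
    (hu : ContDiff ℝ 2 u) (hv : ContDiff ℝ 2 v)
    (hu0 : ∀ x, 0 ≤ u x) (hv0 : ∀ x, 0 ≤ v x)
    (hequ : ∀ x, deriv (deriv u) x + θ * deriv u x
      + k1 * u x * (1 - u x - a1 * v x) ≤ 0)
    (heqv : ∀ x, d * deriv (deriv v) x + θ * deriv v x
      + k2 * v x * (1 - a2 * u x - v x) ≤ 0)
    (hbot : ∀ᶠ x in atBot, min (α / a2) (d * β / a1) ≤ α * u x + d * β * v x)
    (htop : ∀ᶠ x in atTop, min (α / a2) (d * β / a1) ≤ α * u x + d * β * v x) :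
    ∀ x, min (α / (a2 * d)) (β / a1) ≤ α * u x + d * β * v x := by
  rcases le_total 0 θ with hθ | hθ
  · exact lv_core a1 a2 d k1 k2 θ α β ha1 ha2 hd hθ hk1 hk2 hα hβ u v hu hv hu0 hv0
      hequ heqv hbot htop
  · -- reflect
    have htwo : ((1:WithTop ℕ∞) + 1) = 2 := by norm_num
    have hu11 : ContDiff ℝ ((1:WithTop ℕ∞)+1) u := by rw [htwo]; exact hu
    have hv11 : ContDiff ℝ ((1:WithTop ℕ∞)+1) v := by rw [htwo]; exact hv
    have hud : Differentiable ℝ u := hu.differentiable (by norm_num)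
    have hvd : Differentiable ℝ v := hv.differentiable (by norm_num)
    have hud' : Differentiable ℝ (deriv u) :=
      ((contDiff_succ_iff_deriv.mp hu11).2.2).differentiable one_ne_zero
    have hvd' : Differentiable ℝ (deriv v) :=
      ((contDiff_succ_iff_deriv.mp hv11).2.2).differentiable one_ne_zero
    have hneg : ∀ (f : ℝ → ℝ), Differentiable ℝ f → ∀ x : ℝ,
        HasDerivAt (fun y => f (-y)) (-(deriv f (-x))) x := by
      intro f hf x
      have h := ((hf (-x)).hasDerivAt).comp x (hasDerivAt_neg' x)
      exact (by simpa [Function.comp] using h : HasDerivAt (f ∘ Neg.neg) (-(deriv f (-x))) x)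
    have hdU : deriv (fun y => u (-y)) = fun x => -(deriv u (-x)) :=
      funext fun x => (hneg u hud x).deriv
    have hdV : deriv (fun y => v (-y)) = fun x => -(deriv v (-x)) :=
      funext fun x => (hneg v hvd x).deriv
    have hddU : ∀ x, deriv (deriv (fun y => u (-y))) x = deriv (deriv u) (-x) := by
      intro x
      rw [hdU]
      have h2 := (hneg (deriv u) hud' x).neg
      simpa using h2.deriv
    have hddV : ∀ x, deriv (deriv (fun y => v (-y))) x = deriv (deriv v) (-x) := by
      intro x
      rw [hdV]
      have h2 := (hneg (deriv v) hvd' x).neg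
      simpa using h2.deriv
    have hequR : ∀ x, deriv (deriv (fun y => u (-y))) x + (-θ) * deriv (fun y => u (-y)) x
        + k1 * u (-x) * (1 - u (-x) - a1 * v (-x)) ≤ 0 := by
      intro x
      have e2 : deriv (fun y => u (-y)) x = -(deriv u (-x)) := (hneg u hud x).deriv
      rw [hddU x, e2]
      have e3 : (-θ) * -(deriv u (-x)) = θ * deriv u (-x) := by ring
      rw [e3]
      exact hequ (-x)
    have heqvR : ∀ x, d * deriv (deriv (fun y => v (-y))) x + (-θ) * deriv (fun y => v (-y)) x
        + k2 * v (-x) * (1 - a2 * u (-x) - v (-x)) ≤ 0 := by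
      intro x
      have e2 : deriv (fun y => v (-y)) x = -(deriv v (-x)) := (hneg v hvd x).deriv
      rw [hddV x, e2]
      have e3 : (-θ) * -(deriv v (-x)) = θ * deriv v (-x) := by ring
      rw [e3]
      exact heqv (-x)
    have hbotR : ∀ᶠ x in atBot,
        min (α / a2) (d * β / a1) ≤ α * u (-x) + d * β * v (-x) :=
      tendsto_neg_atBot_atTop.eventually htop
    have htopR : ∀ᶠ x in atTop,
        min (α / a2) (d * β / a1) ≤ α * u (-x) + d * β * v (-x) :=
      tendsto_neg_atTop_atBot.eventually hbot
    have hres := lv_core a1 a2 d k1 k2 (-θ) α β ha1 ha2 hd (by linarith) hk1 hk2 hα hβ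
      (fun x => u (-x)) (fun x => v (-x))
      (hu.comp contDiff_neg) (hv.comp contDiff_neg)
      (fun x => hu0 (-x)) (fun x => hv0 (-x)) hequR heqvR hbotR htopR
    intro x
    have h := hres (-x)
    simpa using h

/-- Lower bound for `q(x) = α u(x) + d β v(x)` under the differential
inequalities `≤ 0` for the scaled two-species Lotka-Volterra system. -/
theorem lv_lower_bound_q
    (a1 a2 d k θ α β : ℝ)
    (ha1 : 1 < a1) (ha2 : 1 < a2) (hd : 0 < d) (hk : 0 < k)
    (hα : 0 < α) (hβ : 0 < β)
    (u v : ℝ → ℝ)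
    (hu : ContDiff ℝ 2 u) (hv : ContDiff ℝ 2 v)
    (hu0 : ∀ x, 0 ≤ u x) (hv0 : ∀ x, 0 ≤ v x)
    (hequ : ∀ x, deriv (deriv u) x + θ * deriv u x
      + u x * (1 - u x - a1 * v x) ≤ 0)
    (heqv : ∀ x, d * deriv (deriv v) x + θ * deriv v x
      + k * v x * (1 - a2 * u x - v x) ≤ 0)
    (huM : Tendsto u atBot (nhds 1)) (hvM : Tendsto v atBot (nhds 0))
    (huP : Tendsto u atTop (nhds 0)) (hvP : Tendsto v atTop (nhds 1)) :
    ∀ x : ℝ,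
      min (α / (a2 * d)) (β / a1) * min 1 (d ^ 2) ≤ α * u x + d * β * v x := by
  have ha10 : (0:ℝ) < a1 := lt_trans one_pos ha1
  have ha20 : (0:ℝ) < a2 := lt_trans one_pos ha2
  rcases le_total 1 d with hd1 | hd1
  · -- case d ≥ 1
    have hmin : min 1 (d^2) = 1 := min_eq_left (by nlinarith)
    have hqbot : Tendsto (fun x => α * u x + d * β * v x) atBot (nhds α) := by
      have h := (huM.const_mul α).add (hvM.const_mul (d*β))
      simpa using h
    have hqtop : Tendsto (fun x => α * u x + d * β * v x) atTop (nhds (d*β)) := by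
      have h := (huP.const_mul α).add (hvP.const_mul (d*β))
      simpa using h
    have hCα : min (α/a2) (d*β/a1) < α :=
      lt_of_le_of_lt (min_le_left _ _) (div_lt_self hα ha2)
    have hCβ : min (α/a2) (d*β/a1) < d*β :=
      lt_of_le_of_lt (min_le_right _ _) (div_lt_self (by positivity) ha1)
    have hbot := hqbot.eventually (eventually_ge_nhds hCα)
    have htop := hqtop.eventually (eventually_ge_nhds hCβ)
    have hres := lv_core2 a1 a2 d 1 k θ α β ha1 ha2 hd1 zero_le_one hk.le hα hβ u v hu hv
      hu0 hv0 (fun x => by simpa using hequ x) heqv hbot htop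
    intro x
    rw [hmin, mul_one]
    exact hres x
  · -- case d ≤ 1 : swap the roles of u and v
    have hmin : min 1 (d^2) = d^2 := min_eq_right (by nlinarith)
    have hd1' : (1:ℝ) ≤ 1/d := (le_div_iff₀ hd).mpr (by linarith)
    have hequ' : ∀ x, deriv (deriv v) x + θ/d * deriv v x
        + k/d * v x * (1 - v x - a2 * u x) ≤ 0 := by
      intro x
      have hdd : (1/d) * d = 1 := by field_simp
      have h2 := mul_le_mul_of_nonneg_left (heqv x) (by positivity : (0:ℝ) ≤ 1/d)
      rw [mul_zero] at h2
      have e : (1/d) * (d * deriv (deriv v) x + θ * deriv v x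
            + k * v x * (1 - a2 * u x - v x))
          = deriv (deriv v) x + θ/d * deriv v x + k/d * v x * (1 - v x - a2 * u x) := by
        linear_combination (deriv (deriv v) x) * hdd
      rw [e] at h2
      exact h2
    have heqv' : ∀ x, 1/d * deriv (deriv u) x + θ/d * deriv u x
        + 1/d * u x * (1 - a1 * v x - u x) ≤ 0 := by
      intro x
      have h2 := mul_le_mul_of_nonneg_left (hequ x) (by positivity : (0:ℝ) ≤ 1/d)
      rw [mul_zero] at h2
      have e : (1/d) * (deriv (deriv u) x + θ * deriv u x + u x * (1 - u x - a1 * v x))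
          = 1/d * deriv (deriv u) x + θ/d * deriv u x
            + 1/d * u x * (1 - a1 * v x - u x) := by ring
      rw [e] at h2
      exact h2
    have hbot' : ∀ᶠ x in atBot,
        min (d*β/a1) (1/d*(d*α)/a2) ≤ d*β * v x + 1/d*(d*α) * u x := by
      have hqbot : Tendsto (fun x => d*β * v x + 1/d*(d*α) * u x) atBot
          (nhds (1/d*(d*α))) := by
        have h := (hvM.const_mul (d*β)).add (huM.const_mul (1/d*(d*α)))
        simpa using h
      apply hqbot.eventually (eventually_ge_nhds ?_)
      have e : 1/d*(d*α) = α := by field_simp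
      calc min (d*β/a1) (1/d*(d*α)/a2) ≤ 1/d*(d*α)/a2 := min_le_right _ _
        _ = α / a2 := by rw [e]
        _ < α := div_lt_self hα ha2
        _ = 1/d*(d*α) := e.symm
    have htop' : ∀ᶠ x in atTop,
        min (d*β/a1) (1/d*(d*α)/a2) ≤ d*β * v x + 1/d*(d*α) * u x := by
      have hqtop : Tendsto (fun x => d*β * v x + 1/d*(d*α) * u x) atTop
          (nhds (d*β)) := by
        have h := (hvP.const_mul (d*β)).add (huP.const_mul (1/d*(d*α)))
        simpa using h
      apply hqtop.eventually (eventually_ge_nhds ?_)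
      calc min (d*β/a1) (1/d*(d*α)/a2) ≤ d*β/a1 := min_le_left _ _
        _ < d*β := div_lt_self (by positivity) ha1
    have hres := lv_core2 a2 a1 (1/d) (k/d) (1/d) (θ/d) (d*β) (d*α) ha2 ha1 hd1'
      (by positivity) (by positivity) (by positivity) (by positivity) v u hv hu hv0 hu0
      hequ' heqv' hbot' htop'
    intro x
    rw [hmin]
    have h4 := hres x
    have e4 : d*β * v x + 1/d*(d*α) * u x = α * u x + d * β * v x := by
      field_simp
      ring
    rw [e4] at h4
    have h3 : min (α/(a2*d)) (β/a1) * d^2 ≤ min (d*β/(a1 * (1/d))) (d*α/a2) := by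
      apply le_min
      · have h5 := mul_le_mul_of_nonneg_right
          (min_le_right (α/(a2*d)) (β/a1)) (sq_nonneg d)
        have e : β/a1 * d^2 = d*β/(a1 * (1/d)) := by
          field_simp
        linarith
      · have h5 := mul_le_mul_of_nonneg_right
          (min_le_left (α/(a2*d)) (β/a1)) (sq_nonneg d)
        have e : α/(a2*d) * d^2 = d*α/a2 := by
          field_simp
        linarith
    exact le_trans h3 h4
end

section
/- Let a1 > 1, a2 > 1, d > 0, k > 0, θ ∈ ℝ, and let α > 0, β > 0 be arbitrary constants. Suppose (u, v) is a pair of nonnegative C² functions on ℝ satisfying the differential inequalities u'' + θ u' + u(1 − u − a1 v) ≥ 0 and d v'' + θ v' + k v(1 − a2 u − v) ≥ 0 on ℝ, with (u, v)(x) → (1, 0) as x → −∞ and (u, v)(x) → (0, 1) as x → +∞. Then q(x) = α u(x) + d β v(x) satisfies q(x) ≤ max[α/d, β] · max[1, d²] for every x ∈ ℝ. -/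
/-!
Put `w₁ = α`, `w₂ = dβ` and normalise (swapping the species and rescaling when `d < 1`) so that
`U` has unit diffusion and `V` diffusion `D ≥ 1`; the claim becomes `w₁ U + w₂ V ≤ max w₁ w₂ · D`.
At a global maximum `z` of `W = w₁ U + w₂ V` with `U + V > 1`, both reaction terms are negative,
so `D w₁ · (U-inequality) + w₂ · (V-inequality)` together with `W' = 0`, `W'' ≤ 0` forces
`θ U'(z) (D - 1) > 0`; reflecting `x ↦ -x` we may take `θ > 0`, `U'(z) > 0`.
As long as `U + V ≥ 1` the reaction terms are nonpositive, so `e^{θx} U'` and `e^{θx/D} V'` are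
nondecreasing to the right of `z`: `U` keeps increasing, and since `θ / D ≤ θ`, `w₂` times the
decrease of `V` is at most `D w₁` times the increase of `U`. At the first point where
`U + V ≤ 1` (or at `+∞`, where `U + V` tends to `1`) this bounds `W(z)` by `max w₁ w₂ · D`.
-/

open Filter Real Set Topology

lemma IsLocalMax.deriv_deriv_nonpos {f : ℝ → ℝ} {z : ℝ} (hf : IsLocalMax f z)
    (hc : ContinuousAt f z) : deriv (deriv f) z ≤ 0 := by
  by_contra! hpos
  have hmin := isLocalMin_of_deriv_deriv_pos hpos hf.deriv_eq_zero hc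
  have hconst : f =ᶠ[𝓝 z] fun _ => f z :=
    (hmin.and hf).mono fun x hx => le_antisymm hx.2 hx.1
  have hzero := hconst.deriv.deriv_eq
  simp only [deriv_const'] at hzero
  exact hpos.ne' hzero

lemma Continuous.forall_le_of_tendsto {f : ℝ → ℝ} {a b M : ℝ} (hf : Continuous f)
    (hbot : Tendsto f atBot (𝓝 a)) (htop : Tendsto f atTop (𝓝 b)) (ha : a ≤ M) (hb : b ≤ M)
    (hmax : ∀ z, (∀ x, f x ≤ f z) → f z ≤ M) (x : ℝ) : f x ≤ M := by
  by_contra! hx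
  have hev : ∀ᶠ y in cocompact ℝ, f y ≤ f x := by
    rw [cocompact_eq_atBot_atTop]
    exact eventually_sup.2 ⟨(hbot.eventually_lt_const (ha.trans_lt hx)).mono fun _ => le_of_lt,
      (htop.eventually_lt_const (hb.trans_lt hx)).mono fun _ => le_of_lt⟩
  obtain ⟨z, hz⟩ := hf.exists_forall_ge' x hev
  exact hx.not_ge ((hz x).trans (hmax z hz))

lemma monotoneOn_exp_mul_deriv {f : ℝ → ℝ} {κ a b : ℝ} (hf : ContDiff ℝ 2 f)
    (h : ∀ y ∈ Ioo a b, 0 ≤ deriv (deriv f) y + κ * deriv f y) :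
    MonotoneOn (fun y => exp (κ * y) * deriv f y) (Icc a b) := by
  have hd : ∀ y, HasDerivAt (fun y => exp (κ * y) * deriv f y)
      (exp (κ * y) * (deriv (deriv f) y + κ * deriv f y)) y := fun y => by
    refine (((hasDerivAt_id' y).const_mul κ).exp.fun_mul
      (hf.differentiable_deriv_two y).hasDerivAt).congr_deriv ?_
    ring
  refine monotoneOn_of_hasDerivWithinAt_nonneg (convex_Icc a b)
    (fun y _ => (hd y).continuousAt.continuousWithinAt) (fun y _ => (hd y).hasDerivWithinAt)
    fun y hy => ?_
  rw [interior_Icc] at hy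
  exact mul_nonneg (exp_pos _).le (h y hy)

lemma deriv_mul_one_sub_exp_div_le_sub {f : ℝ → ℝ} {κ a x : ℝ} (hf : ContDiff ℝ 2 f)
    (hκ : κ ≠ 0) (hax : a ≤ x) (h : ∀ y ∈ Ioo a x, 0 ≤ deriv (deriv f) y + κ * deriv f y) :
    deriv f a * (1 - exp (-(κ * (x - a)))) / κ ≤ f x - f a := by
  set F : ℝ → ℝ := fun y => f y - deriv f a * (1 - exp (-(κ * (y - a)))) / κ
  have hF : ∀ y, HasDerivAt F (deriv f y - deriv f a * exp (-(κ * (y - a)))) y := fun y => by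
    have he := ((((hasDerivAt_id' y).sub_const a).const_mul κ).fun_neg).exp
    refine ((hf.differentiable (by norm_num) y).hasDerivAt.fun_sub
      (((hasDerivAt_const y 1).fun_sub he).const_mul (deriv f a) |>.div_const κ)).congr_deriv ?_
    field_simp
    ring
  have hmono := monotoneOn_exp_mul_deriv hf h
  have hFmono : MonotoneOn F (Icc a x) := by
    refine monotoneOn_of_hasDerivWithinAt_nonneg (convex_Icc a x)
      (fun y _ => (hF y).continuousAt.continuousWithinAt) (fun y _ => (hF y).hasDerivWithinAt)
      fun y hy => ?_
    rw [interior_Icc] at hy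
    have hle : exp (κ * a) * deriv f a ≤ exp (κ * y) * deriv f y :=
      hmono (left_mem_Icc.2 hax) (Ioo_subset_Icc_self hy) hy.1.le
    have hsplit : exp (-(κ * (y - a))) = exp (κ * a) * exp (-(κ * y)) := by
      rw [← exp_add]; ring_nf
    have hinv : exp (κ * y) * exp (-(κ * y)) = 1 := by rw [← exp_add]; simp
    rw [sub_nonneg, hsplit]
    calc deriv f a * (exp (κ * a) * exp (-(κ * y)))
        = exp (κ * a) * deriv f a * exp (-(κ * y)) := by ring
      _ ≤ exp (κ * y) * deriv f y * exp (-(κ * y)) := by gcongr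
      _ = deriv f y := by rw [mul_right_comm, hinv, one_mul]
  have := hFmono (left_mem_Icc.2 hax) (right_mem_Icc.2 hax) hax
  simp only [F, sub_self, mul_zero, neg_zero, exp_zero, zero_div, sub_zero] at this
  linarith

lemma growth_bounds_of_deriv_pos {D θ w₁ w₂ x₀ x : ℝ} {U V : ℝ → ℝ} (hD : 1 ≤ D) (hθ : 0 < θ)
    (hw₁ : 0 < w₁) (hw₂ : 0 < w₂) (hU : ContDiff ℝ 2 U) (hV : ContDiff ℝ 2 V)
    (hU' : ∀ y ∈ Ioo x₀ x, 0 ≤ deriv (deriv U) y + θ * deriv U y)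
    (hV' : ∀ y ∈ Ioo x₀ x, 0 ≤ D * deriv (deriv V) y + θ * deriv V y)
    (hp : 0 < deriv U x₀) (hrel : w₁ * deriv U x₀ + w₂ * deriv V x₀ = 0) (hx : x₀ ≤ x) :
    U x₀ ≤ U x ∧ w₂ * (V x₀ - V x) ≤ D * (w₁ * (U x - U x₀)) := by
  have hD0 : 0 < D := by linarith
  set p := deriv U x₀
  have hUgrowth := deriv_mul_one_sub_exp_div_le_sub hU hθ.ne' hx hU'
  have hVgrowth := deriv_mul_one_sub_exp_div_le_sub hV (κ := θ / D) (by positivity) hx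
    fun y hy => by
      have := div_nonneg (hV' y hy) hD0.le
      rwa [add_div, mul_div_cancel_left₀ _ hD0.ne', mul_div_right_comm] at this
  have hexp : exp (-(θ * (x - x₀))) ≤ exp (-(θ / D * (x - x₀))) := by
    gcongr
    exact div_le_self hθ.le hD
  have hexp1 : exp (-(θ * (x - x₀))) ≤ 1 := exp_le_one_iff.2 (by nlinarith)
  have hVx₀ : deriv V x₀ = -(w₁ * p / w₂) := by field_simp; linarith
  have hY : 0 ≤ p * (1 - exp (-(θ * (x - x₀)))) / θ :=
    div_nonneg (mul_nonneg hp.le (by linarith)) hθ.le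
  have hVdrop : V x₀ - V x ≤ w₁ * p / w₂ * (1 - exp (-(θ / D * (x - x₀)))) / (θ / D) := by
    rw [hVx₀, neg_mul, neg_div] at hVgrowth
    linarith
  refine ⟨by linarith, ?_⟩
  calc w₂ * (V x₀ - V x)
      ≤ w₂ * (w₁ * p / w₂ * (1 - exp (-(θ / D * (x - x₀)))) / (θ / D)) := by gcongr
    _ = D * (w₁ * (p * (1 - exp (-(θ / D * (x - x₀)))) / θ)) := by field_simp
    _ ≤ D * (w₁ * (p * (1 - exp (-(θ * (x - x₀)))) / θ)) := by gcongr
    _ ≤ D * (w₁ * (U x - U x₀)) := by gcongr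

lemma add_le_max_mul_of_exit {D w₁ w₂ u₀ v₀ U₁ V₁ : ℝ} (hD : 1 ≤ D) (hw₁ : 0 < w₁)
    (hw₂ : 0 < w₂) (hu₀ : 0 ≤ u₀) (hV₁ : 0 ≤ V₁) (hsum : U₁ + V₁ ≤ 1) (hU : u₀ ≤ U₁)
    (hV : w₂ * (v₀ - V₁) ≤ D * (w₁ * (U₁ - u₀))) :
    w₁ * u₀ + w₂ * v₀ ≤ max w₁ w₂ * D := by
  have h₁ : w₁ * D ≤ max w₁ w₂ * D := by gcongr; exact le_max_left _ _
  have h₂ : w₂ * D ≤ max w₁ w₂ * D := by gcongr; exact le_max_right _ _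
  have hV₁' : w₂ * V₁ ≤ w₂ * (1 - U₁) := by gcongr; linarith
  rcases le_total w₂ (w₁ * D) with h | h
  · nlinarith [mul_nonneg (mul_nonneg hw₁.le hu₀) (sub_nonneg.2 hD),
      mul_nonneg (sub_nonneg.2 h) (by linarith : 0 ≤ 1 - U₁)]
  · nlinarith [mul_nonpos_of_nonpos_of_nonneg (sub_nonpos.2 h) (sub_nonneg.2 hU),
      mul_nonneg (by nlinarith : 0 ≤ w₂ - w₁) hu₀, mul_nonneg hw₂.le (sub_nonneg.2 hD)]

lemma add_le_max_mul_of_add_le_one {D w₁ w₂ s t : ℝ} (hD : 1 ≤ D) (hw₁ : 0 < w₁)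
    (hs : 0 ≤ s) (ht : 0 ≤ t) (hst : s + t ≤ 1) :
    w₁ * s + w₂ * t ≤ max w₁ w₂ * D := by
  have hM : 0 < max w₁ w₂ := lt_max_of_lt_left hw₁
  calc w₁ * s + w₂ * t ≤ max w₁ w₂ * s + max w₁ w₂ * t := by
        gcongr
        · exact le_max_left _ _
        · exact le_max_right _ _
    _ ≤ max w₁ w₂ * 1 := by rw [← mul_add]; gcongr
    _ ≤ max w₁ w₂ * D := by gcongr

/-- `U` is a subsolution of `D U'' + θ U' + K U (1 - U - A V) = 0`, the competitor `V` being
given; both equations of the system are instances, with the roles of the species exchanged. -/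
def IsCompetitionSubsolution (D θ K A : ℝ) (U V : ℝ → ℝ) : Prop :=
  ∀ x, 0 ≤ D * deriv (deriv U) x + θ * deriv U x + K * (U x * (1 - U x - A * V x))

namespace IsCompetitionSubsolution

variable {D θ K A K₁ K₂ A₁ A₂ w₁ w₂ : ℝ} {U V : ℝ → ℝ}

lemma comp_neg (h : IsCompetitionSubsolution D θ K A U V) :
    IsCompetitionSubsolution D (-θ) K A (fun x => U (-x)) (fun x => V (-x)) := fun x => by
  have hU' : deriv (fun y => U (-y)) = fun y => -deriv U (-y) :=
    funext fun y => deriv_comp_neg U y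
  rw [hU', deriv.fun_neg, deriv_comp_neg]
  linarith [h (-x)]

lemma div (h : IsCompetitionSubsolution D θ K A U V) {s : ℝ} (hs : 0 < s) :
    IsCompetitionSubsolution (D / s) (θ / s) (K / s) A U V := fun x => by
  calc 0 ≤ (D * deriv (deriv U) x + θ * deriv U x + K * (U x * (1 - U x - A * V x))) / s :=
        div_nonneg (h x) hs.le
    _ = _ := by ring

lemma deriv_terms_nonneg_of_one_le_add (h : IsCompetitionSubsolution D θ K A U V) (hK : 0 ≤ K)
    (hA : 1 ≤ A) {x : ℝ} (hU : 0 ≤ U x) (hV : 0 ≤ V x) (hx : 1 ≤ U x + V x) :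
    0 ≤ D * deriv (deriv U) x + θ * deriv U x := by
  have hreact : K * (U x * (1 - U x - A * V x)) ≤ 0 :=
    mul_nonpos_of_nonneg_of_nonpos hK (mul_nonpos_of_nonneg_of_nonpos hU (by nlinarith))
  linarith [h x]

lemma weighted_le_of_deriv_pos (hD : 1 ≤ D) (hθ : 0 < θ) (hw₁ : 0 < w₁) (hw₂ : 0 < w₂)
    (hK₁ : 0 ≤ K₁) (hK₂ : 0 ≤ K₂) (hA₁ : 1 ≤ A₁) (hA₂ : 1 ≤ A₂)
    (hU : ContDiff ℝ 2 U) (hV : ContDiff ℝ 2 V) (hU0 : ∀ x, 0 ≤ U x) (hV0 : ∀ x, 0 ≤ V x)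
    (hE₁ : IsCompetitionSubsolution 1 θ K₁ A₁ U V) (hE₂ : IsCompetitionSubsolution D θ K₂ A₂ V U)
    {a b : ℝ} (hUtop : Tendsto U atTop (𝓝 a)) (hVtop : Tendsto V atTop (𝓝 b)) (hab : a + b ≤ 1)
    {x₀ : ℝ} (hp : 0 < deriv U x₀) (hrel : w₁ * deriv U x₀ + w₂ * deriv V x₀ = 0) :
    w₁ * U x₀ + w₂ * V x₀ ≤ max w₁ w₂ * D := by
  have hgrowth : ∀ x, x₀ ≤ x → (∀ y ∈ Ioo x₀ x, 1 ≤ U y + V y) →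
      U x₀ ≤ U x ∧ w₂ * (V x₀ - V x) ≤ D * (w₁ * (U x - U x₀)) := fun x hx hzone =>
    growth_bounds_of_deriv_pos hD hθ hw₁ hw₂ hU hV
      (fun y hy => by
        simpa using hE₁.deriv_terms_nonneg_of_one_le_add hK₁ hA₁ (hU0 y) (hV0 y) (hzone y hy))
      (fun y hy => hE₂.deriv_terms_nonneg_of_one_le_add hK₂ hA₂ (hV0 y) (hU0 y)
        (by linarith [hzone y hy]))
      hp hrel hx
  suffices ∃ U₁ V₁, 0 ≤ V₁ ∧ U₁ + V₁ ≤ 1 ∧ U x₀ ≤ U₁ ∧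
      w₂ * (V x₀ - V₁) ≤ D * (w₁ * (U₁ - U x₀)) by
    obtain ⟨U₁, V₁, hV₁, hsum, hU₁, hV₁'⟩ := this
    exact add_le_max_mul_of_exit hD hw₁ hw₂ (hU0 x₀) hV₁ hsum hU₁ hV₁'
  set T := {x | x₀ ≤ x ∧ U x + V x ≤ 1}
  rcases T.eq_empty_or_nonempty with hT | hT
  · have hall : ∀ x, x₀ ≤ x →
        U x₀ ≤ U x ∧ w₂ * (V x₀ - V x) ≤ D * (w₁ * (U x - U x₀)) := fun x hx =>
      hgrowth x hx fun y hy => le_of_not_ge fun hy' =>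
        hT.subset ⟨hy.1.le, hy'⟩
    refine ⟨a, b, ge_of_tendsto' hVtop hV0, hab,
      ge_of_tendsto hUtop (eventually_atTop.2 ⟨x₀, fun x hx => (hall x hx).1⟩),
      le_of_tendsto_of_tendsto ((tendsto_const_nhds.sub hVtop).const_mul w₂)
        (((hUtop.sub_const (U x₀)).const_mul w₁).const_mul D)
        (eventually_atTop.2 ⟨x₀, fun x hx => (hall x hx).2⟩)⟩
  · have hTclosed : IsClosed T :=
      (isClosed_le continuous_const continuous_id).inter
        (isClosed_le (hU.continuous.add hV.continuous) continuous_const)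
    have hbdd : BddBelow T := ⟨x₀, fun x hx => hx.1⟩
    have hx₁ : sInf T ∈ T := hTclosed.csInf_mem hT hbdd
    refine ⟨U (sInf T), V (sInf T), hV0 _, hx₁.2, hgrowth _ hx₁.1 fun y hy => ?_⟩
    by_contra! hy'
    exact hy.2.not_ge (csInf_le hbdd ⟨hy.1.le, le_of_lt hy'⟩)

lemma mul_deriv_pos_of_isCritical (hE₁ : IsCompetitionSubsolution 1 θ K₁ A₁ U V) (hD : 1 ≤ D)
    (hw₁ : 0 < w₁) (hw₂ : 0 < w₂) (hK₁ : 0 < K₁) (hK₂ : 0 < K₂) (hA₁ : 1 ≤ A₁) (hA₂ : 1 ≤ A₂)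
    (hE₂ : IsCompetitionSubsolution D θ K₂ A₂ V U) {z : ℝ} (hUz : 0 ≤ U z) (hVz : 0 ≤ V z)
    (hz : 1 < U z + V z) (hrel : w₁ * deriv U z + w₂ * deriv V z = 0)
    (hconc : w₁ * deriv (deriv U) z + w₂ * deriv (deriv V) z ≤ 0) :
    0 < θ * deriv U z := by
  have hreact : w₁ * D * K₁ * (U z * (1 - U z - A₁ * V z))
      + w₂ * K₂ * (V z * (1 - A₂ * U z - V z)) < 0 := by
    have h₁ : U z * (1 - U z - A₁ * V z) ≤ -(U z * (U z + V z - 1)) := by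
      nlinarith [mul_nonneg hUz hVz]
    have h₂ : V z * (1 - A₂ * U z - V z) ≤ -(V z * (U z + V z - 1)) := by
      nlinarith [mul_nonneg hUz hVz]
    have hpos : 0 < w₁ * D * K₁ * U z + w₂ * K₂ * V z := by
      rcases hUz.lt_or_eq with hUz' | hUz'
      · positivity
      · have hVz' : 0 < V z := by rw [← hUz'] at hz; linarith
        positivity
    calc _ ≤ w₁ * D * K₁ * -(U z * (U z + V z - 1)) + w₂ * K₂ * -(V z * (U z + V z - 1)) := by
          gcongr
      _ = -((w₁ * D * K₁ * U z + w₂ * K₂ * V z) * (U z + V z - 1)) := by ring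
      _ < 0 := neg_neg_of_pos (mul_pos hpos (by linarith))
  have t₁ := mul_nonneg (mul_nonneg hw₁.le (by linarith : 0 ≤ D)) (hE₁ z)
  have t₂ := mul_nonneg hw₂.le (hE₂ z)
  have t₃ := mul_nonpos_of_nonneg_of_nonpos (by linarith : 0 ≤ D) hconc
  have t₄ : θ * (w₁ * deriv U z + w₂ * deriv V z) = 0 := by rw [hrel, mul_zero]
  have h : 0 < θ * deriv U z * (w₁ * (D - 1)) := by linarith
  exact pos_of_mul_pos_left h (mul_nonneg hw₁.le (by linarith))

lemma weighted_le (hD : 1 ≤ D) (hw₁ : 0 < w₁) (hw₂ : 0 < w₂)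
    (hK₁ : 0 < K₁) (hK₂ : 0 < K₂) (hA₁ : 1 ≤ A₁) (hA₂ : 1 ≤ A₂)
    (hU : ContDiff ℝ 2 U) (hV : ContDiff ℝ 2 V) (hU0 : ∀ x, 0 ≤ U x) (hV0 : ∀ x, 0 ≤ V x)
    (hE₁ : IsCompetitionSubsolution 1 θ K₁ A₁ U V) (hE₂ : IsCompetitionSubsolution D θ K₂ A₂ V U)
    {a b a' b' : ℝ} (hUbot : Tendsto U atBot (𝓝 a)) (hVbot : Tendsto V atBot (𝓝 b))
    (hab : a + b ≤ 1) (hUtop : Tendsto U atTop (𝓝 a')) (hVtop : Tendsto V atTop (𝓝 b'))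
    (hab' : a' + b' ≤ 1) (x : ℝ) :
    w₁ * U x + w₂ * V x ≤ max w₁ w₂ * D := by
  set W : ℝ → ℝ := fun x => w₁ * U x + w₂ * V x
  have hW' : ∀ y, HasDerivAt W (w₁ * deriv U y + w₂ * deriv V y) y := fun y =>
    ((hU.differentiable (by norm_num) y).hasDerivAt.const_mul w₁).fun_add
      ((hV.differentiable (by norm_num) y).hasDerivAt.const_mul w₂)
  have hW'' : ∀ y, HasDerivAt (deriv W)
      (w₁ * deriv (deriv U) y + w₂ * deriv (deriv V) y) y := fun y => by
    rw [funext fun y => (hW' y).deriv]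
    exact ((hU.differentiable_deriv_two y).hasDerivAt.const_mul w₁).fun_add
      ((hV.differentiable_deriv_two y).hasDerivAt.const_mul w₂)
  refine Continuous.forall_le_of_tendsto (f := W) (by fun_prop)
    ((hUbot.const_mul w₁).add (hVbot.const_mul w₂)) ((hUtop.const_mul w₁).add (hVtop.const_mul w₂))
    (add_le_max_mul_of_add_le_one hD hw₁ (ge_of_tendsto' hUbot hU0) (ge_of_tendsto' hVbot hV0) hab)
    (add_le_max_mul_of_add_le_one hD hw₁ (ge_of_tendsto' hUtop hU0) (ge_of_tendsto' hVtop hV0) hab')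
    (fun z hz => ?_) x
  have hmax : IsLocalMax W z := Filter.Eventually.of_forall hz
  have hrel : w₁ * deriv U z + w₂ * deriv V z = 0 := (hW' z).deriv ▸ hmax.deriv_eq_zero
  have hconc : w₁ * deriv (deriv U) z + w₂ * deriv (deriv V) z ≤ 0 :=
    (hW'' z).deriv ▸ hmax.deriv_deriv_nonpos (hW' z).continuousAt
  rcases le_or_gt (U z + V z) 1 with hz1 | hz1
  · exact add_le_max_mul_of_add_le_one hD hw₁ (hU0 z) (hV0 z) hz1
  have hsign := hE₁.mul_deriv_pos_of_isCritical hD hw₁ hw₂ hK₁ hK₂ hA₁ hA₂ hE₂ (hU0 z) (hV0 z)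
    hz1 hrel hconc
  rcases lt_trichotomy θ 0 with hθ | hθ | hθ
  · have hp : deriv U z < 0 := neg_of_mul_pos_right hsign hθ.le
    have := hE₁.comp_neg.weighted_le_of_deriv_pos (U := fun x => U (-x))
      (V := fun x => V (-x)) (x₀ := -z) hD (neg_pos.2 hθ) hw₁ hw₂
      hK₁.le hK₂.le hA₁ hA₂ (hU.comp contDiff_neg) (hV.comp contDiff_neg) (fun _ => hU0 _)
      (fun _ => hV0 _) hE₂.comp_neg (hUbot.comp tendsto_neg_atTop_atBot)
      (hVbot.comp tendsto_neg_atTop_atBot) hab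
      (by rw [deriv_comp_neg, neg_neg]; linarith)
      (by rw [deriv_comp_neg, deriv_comp_neg, neg_neg]; linarith)
    simpa using this
  · simp [hθ] at hsign
  · have hp : 0 < deriv U z := pos_of_mul_pos_right hsign hθ.le
    exact hE₁.weighted_le_of_deriv_pos hD hθ hw₁ hw₂ hK₁.le hK₂.le hA₁ hA₂ hU hV hU0 hV0 hE₂
      hUtop hVtop hab' hp hrel

end IsCompetitionSubsolution

/-- Upper bound for `q(x) = α u(x) + d β v(x)` under the differential
inequalities `≥ 0` for the scaled two-species Lotka-Volterra system. -/
theorem lv_upper_bound_q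
    (a1 a2 d k θ α β : ℝ)
    (ha1 : 1 < a1) (ha2 : 1 < a2) (hd : 0 < d) (hk : 0 < k)
    (hα : 0 < α) (hβ : 0 < β)
    (u v : ℝ → ℝ)
    (hu : ContDiff ℝ 2 u) (hv : ContDiff ℝ 2 v)
    (hu0 : ∀ x, 0 ≤ u x) (hv0 : ∀ x, 0 ≤ v x)
    (hequ : ∀ x, 0 ≤ deriv (deriv u) x + θ * deriv u x
      + u x * (1 - u x - a1 * v x))
    (heqv : ∀ x, 0 ≤ d * deriv (deriv v) x + θ * deriv v x
      + k * v x * (1 - a2 * u x - v x))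
    (huM : Tendsto u atBot (nhds 1)) (hvM : Tendsto v atBot (nhds 0))
    (huP : Tendsto u atTop (nhds 0)) (hvP : Tendsto v atTop (nhds 1)) :
    ∀ x : ℝ,
      α * u x + d * β * v x ≤ max (α / d) β * max 1 (d ^ 2) := by
  intro x
  have hE₁ : IsCompetitionSubsolution 1 θ 1 a1 u v := fun y => by linarith [hequ y]
  have hE₂ : IsCompetitionSubsolution d θ k a2 v u := fun y => by linarith [heqv y]
  rcases le_total 1 d with hd1 | hd1
  · calc α * u x + d * β * v x ≤ max α (d * β) * d :=
          hE₁.weighted_le hd1 hα (by positivity) one_pos hk ha1.le ha2.le hu hv hu0 hv0 hE₂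
            huM hvM (by norm_num) huP hvP (by norm_num) x
      _ = max (α / d) β * d * d := by
          rw [max_mul_of_nonneg (α / d) β hd.le, div_mul_cancel₀ _ hd.ne', mul_comm β]
      _ = max (α / d) β * max 1 (d ^ 2) := by rw [max_eq_right (one_le_pow₀ hd1)]; ring
  · -- after dividing by `d`, `v` is the species with unit diffusion and `u` diffuses at `1 / d ≥ 1`
    have hE₂' : IsCompetitionSubsolution 1 (θ / d) (k / d) a2 v u := by
      simpa only [div_self hd.ne'] using hE₂.div hd
    calc α * u x + d * β * v x = d * β * v x + α * u x := add_comm _ _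
      _ ≤ max (d * β) α * (1 / d) :=
          hE₂'.weighted_le ((one_le_div hd).2 hd1) (by positivity) hα (by positivity)
            (by positivity) ha2.le ha1.le hv hu hv0 hu0 (hE₁.div hd) hvM huM (by norm_num) hvP huP (by norm_num) x
      _ = max (α / d) β * max 1 (d ^ 2) := by
          rw [max_eq_left (pow_le_one₀ hd.le hd1), mul_one, mul_one_div, ← max_div_div_right hd.le,
            mul_div_cancel_left₀ _ hd.ne', max_comm]
end

section
/- Let a1 > 1, a2 > 1, k > 0, α > 0, β > 0, d > 0 with β d² − d(α a1 + a2 β k) + α k ≠ 0. Define E = β d² − d(α a1 + a2 β k) + α k, μ2 = [(α a1 + a2 β k)² − 4 α β k]/(4 α β E), μ1 = −2 α β [(d + k)(α a1 + a2 β k) − 2k(α + β d)]/(4 α β E), and μ0 = α β (d − k)²/(4E). Then the discriminant D = μ1² − 4 μ2 μ0 equals k(α + β k − a1 α − a2 β k)/E, D is never zero, and D > 0 if and only if [α a1 + a2 β k − √((α a1 + a2 β k)² − 4 α β k)]/(2β) < d < [α a1 + a2 β k + √((α a1 + a2 β k)² − 4 α β k)]/(2β). -/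
open Real

set_option maxHeartbeats 1000000 in
/-- The discriminant `D = μ1² − 4 μ2 μ0` of the quadratic equation for the
tangent value `λ2`: its closed form, nonvanishing, and positivity criterion. -/
theorem lv_tangent_discriminant
    (a1 a2 k α β d : ℝ)
    (ha1 : 1 < a1) (ha2 : 1 < a2) (hk : 0 < k) (hα : 0 < α) (hβ : 0 < β)
    (hd : 0 < d)
    (hE0 : β * d ^ 2 - d * (α * a1 + a2 * β * k) + α * k ≠ 0)
    (E μ2 μ1 μ0 : ℝ)
    (hE : E = β * d ^ 2 - d * (α * a1 + a2 * β * k) + α * k)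
    (hμ2 : μ2 = ((α * a1 + a2 * β * k) ^ 2 - 4 * α * β * k) / (4 * α * β * E))
    (hμ1 : μ1 = -2 * α * β * ((d + k) * (α * a1 + a2 * β * k)
      - 2 * k * (α + β * d)) / (4 * α * β * E))
    (hμ0 : μ0 = α * β * (d - k) ^ 2 / (4 * E)) :
    μ1 ^ 2 - 4 * μ2 * μ0 = k * (α + β * k - a1 * α - a2 * β * k) / E ∧
    μ1 ^ 2 - 4 * μ2 * μ0 ≠ 0 ∧
    (0 < μ1 ^ 2 - 4 * μ2 * μ0 ↔
      (α * a1 + a2 * β * k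
        - Real.sqrt ((α * a1 + a2 * β * k) ^ 2 - 4 * α * β * k)) / (2 * β) < d ∧
      d < (α * a1 + a2 * β * k
        + Real.sqrt ((α * a1 + a2 * β * k) ^ 2 - 4 * α * β * k)) / (2 * β)) := by
  have hEne : E ≠ 0 := hE ▸ hE0
  have hα' : α ≠ 0 := ne_of_gt hα
  have hβ' : β ≠ 0 := ne_of_gt hβ
  have hD : μ1 ^ 2 - 4 * μ2 * μ0 = k * (α + β * k - a1 * α - a2 * β * k) / E := by
    subst hμ2 hμ1 hμ0
    field_simp
    subst hE
    ring
  have hβk : 0 < β * k := mul_pos hβ hk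
  have hnum : k * (α + β * k - a1 * α - a2 * β * k) < 0 := by
    apply mul_neg_of_pos_of_neg hk
    nlinarith [mul_pos hβk (sub_pos.mpr ha2), mul_pos hα (sub_pos.mpr ha1)]
  have hP : 0 < (α * a1 + a2 * β * k) - (α + β * k) := by
    nlinarith [mul_pos hβk (sub_pos.mpr ha2), mul_pos hα (sub_pos.mpr ha1)]
  have hQ : 0 < (α * a1 + a2 * β * k) + (α + β * k) := by nlinarith
  have hΔ : 0 < (α * a1 + a2 * β * k) ^ 2 - 4 * α * β * k := by
    nlinarith [sq_nonneg (α - β * k), mul_pos hP hQ]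
  set s := Real.sqrt ((α * a1 + a2 * β * k) ^ 2 - 4 * α * β * k) with hs
  have hs2 : s ^ 2 = (α * a1 + a2 * β * k) ^ 2 - 4 * α * β * k := Real.sq_sqrt hΔ.le
  have hs0 : 0 ≤ s := Real.sqrt_nonneg _
  refine ⟨hD, ?_, ?_⟩
  · rw [hD]
    exact div_ne_zero (ne_of_lt hnum) hEne
  · rw [hD]
    constructor
    · intro h
      have hElt : E < 0 := by
        rcases lt_or_gt_of_ne hEne with hE1 | hE1
        · exact hE1
        · exfalso
          have := div_pos_iff.mp h
          rcases this with ⟨h1, _⟩ | ⟨_, h2⟩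
          · linarith
          · linarith
      rw [hE] at hElt
      have hsq : (2 * β * d - (α * a1 + a2 * β * k)) ^ 2 < s ^ 2 := by
        rw [hs2]; nlinarith
      have h1 : -(s) < 2 * β * d - (α * a1 + a2 * β * k) := by nlinarith
      have h2 : 2 * β * d - (α * a1 + a2 * β * k) < s := by nlinarith
      constructor
      · rw [div_lt_iff₀ (by linarith : (0:ℝ) < 2 * β)]; linarith
      · rw [lt_div_iff₀ (by linarith : (0:ℝ) < 2 * β)]; linarith
    · rintro ⟨h1, h2⟩
      rw [div_lt_iff₀ (by linarith : (0:ℝ) < 2 * β)] at h1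
      rw [lt_div_iff₀ (by linarith : (0:ℝ) < 2 * β)] at h2
      have hsq : (2 * β * d - (α * a1 + a2 * β * k)) ^ 2 < s ^ 2 := by
        nlinarith [mul_pos (show (0:ℝ) < s - (2 * β * d - (α * a1 + a2 * β * k)) by linarith)
          (show (0:ℝ) < (2 * β * d - (α * a1 + a2 * β * k)) + s by linarith)]
      have key : 4 * β * (β * d ^ 2 - d * (α * a1 + a2 * β * k) + α * k)
          = (2 * β * d - (α * a1 + a2 * β * k)) ^ 2 - s ^ 2 := by
        rw [hs2]; ring
      have hElt : E < 0 := by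
        rw [hE]; nlinarith
      exact div_pos_of_neg_of_neg hnum hElt
end

section
/- Let d1, d2, σ1, σ2 and c11, c12, c21, c22 be positive constants satisfying the bistable condition σ1/c11 > σ2/c21 and σ2/c22 > σ1/c12, let θ ∈ ℝ, and let α > 0, β > 0 be arbitrary constants. Suppose (u, v) is a pair of nonnegative C² functions on ℝ satisfying the differential inequalities d1 u'' + θ u' + u(σ1 − c11 u − c12 v) ≥ 0 and d2 v'' + θ v' + v(σ2 − c21 u − c22 v) ≥ 0 on ℝ, with (u,v)(x) → (σ1/c11, 0) as x → −∞ and (u,v)(x) → (0, σ2/c22) as x → +∞. Then q(x) = d1 α u(x) + d2 β v(x) satisfies q(x) ≤ max[α σ1/(c11 d2), β σ2/(c22 d1)] · max[d1², d2²] for every x ∈ ℝ. -/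
open Filter

open Set Real Topology

lemma lv_deriv_nonpos_of_left_min {f : ℝ → ℝ} {f' b c : ℝ} (hd : HasDerivAt f f' b)
    (hcb : c < b) (hmin : ∀ x, c ≤ x → x < b → f b ≤ f x) : f' ≤ 0 := by
  have hs : Tendsto (slope f b) (𝓝[<] b) (𝓝 f') :=
    (hasDerivAt_iff_tendsto_slope.mp hd).mono_left
      (nhdsWithin_mono _ (fun x hx => ne_of_lt hx))
  refine le_of_tendsto hs ?_
  filter_upwards [Ioo_mem_nhdsLT_of_mem (Set.mem_Ioc.mpr ⟨hcb, le_refl b⟩)] with x hx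
  have h1 : f b ≤ f x := hmin x hx.1.le hx.2
  have h2 : slope f b x = (f x - f b) / (x - b) := slope_def_field f b x
  rw [h2]
  apply div_nonpos_of_nonneg_of_nonpos <;> nlinarith [hx.2]

lemma lv_deriv_nonneg_of_right_min {f : ℝ → ℝ} {f' a c : ℝ} (hd : HasDerivAt f f' a)
    (hac : a < c) (hmin : ∀ x, a < x → x ≤ c → f a ≤ f x) : 0 ≤ f' := by
  have hs : Tendsto (slope f a) (𝓝[>] a) (𝓝 f') :=
    (hasDerivAt_iff_tendsto_slope.mp hd).mono_left
      (nhdsWithin_mono _ (fun x hx => ne_of_gt hx))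
  refine ge_of_tendsto hs ?_
  filter_upwards [Ioo_mem_nhdsGT_of_mem (Set.mem_Ico.mpr ⟨le_refl a, hac⟩)] with x hx
  have h1 : f a ≤ f x := hmin x hx.1 hx.2.le
  have h2 : slope f a x = (f x - f a) / (x - a) := slope_def_field f a x
  rw [h2]
  apply div_nonneg <;> nlinarith [hx.1]

lemma lv_exp_monoOn {d θ c e : ℝ} (hd : 0 < d) {W DW : ℝ → ℝ}
    (hW : ∀ x, HasDerivAt W (DW x) x)
    (hineq : ∀ x ∈ Set.Ioo c e, 0 ≤ d * DW x + θ * W x) :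
    MonotoneOn (fun x => W x * Real.exp (θ * x / d)) (Set.Icc c e) := by
  have hE : ∀ x : ℝ, HasDerivAt (fun y => W y * Real.exp (θ * y / d))
      (DW x * Real.exp (θ * x / d) + W x * (Real.exp (θ * x / d) * (θ / d))) x := by
    intro x
    have h2 : HasDerivAt (fun y : ℝ => θ * y) θ x := by
      simpa using (hasDerivAt_id x).const_mul θ
    have h1 : HasDerivAt (fun y : ℝ => θ * y / d) (θ / d) x := h2.div_const d
    exact (hW x).mul h1.exp
  apply monotoneOn_of_deriv_nonneg (convex_Icc c e)
  · exact (Differentiable.continuous (fun x => (hE x).differentiableAt)).continuousOn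
  · exact fun x _ => (hE x).differentiableAt.differentiableWithinAt
  · intro x hx
    rw [interior_Icc] at hx
    rw [(hE x).deriv]
    have h3 := hineq x hx
    have h4 : DW x * Real.exp (θ * x / d) + W x * (Real.exp (θ * x / d) * (θ / d))
        = (Real.exp (θ * x / d) / d) * (d * DW x + θ * W x) := by
      field_simp
    rw [h4]
    exact mul_nonneg (div_pos (Real.exp_pos _) hd).le h3

lemma lv_exp_bound_right {d θ z b : ℝ} (hd : 0 < d) (hzb : z ≤ b) {W DW : ℝ → ℝ}
    (hW : ∀ x, HasDerivAt W (DW x) x)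
    (hineq : ∀ x ∈ Set.Ioo z b, 0 ≤ d * DW x + θ * W x) :
    ∀ x ∈ Set.Icc z b, W z * Real.exp (θ * (z - x) / d) ≤ W x := by
  intro x hx
  have hm := lv_exp_monoOn hd hW hineq (Set.mem_Icc.mpr ⟨le_rfl, hzb⟩) hx hx.1
  have h1 : W z * Real.exp (θ * (z - x) / d)
      = (W z * Real.exp (θ * z / d)) * Real.exp (-(θ * x / d)) := by
    rw [mul_assoc, ← Real.exp_add]
    congr 2
    ring
  have h2 : (W x * Real.exp (θ * x / d)) * Real.exp (-(θ * x / d)) = W x := by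
    rw [mul_assoc, ← Real.exp_add]
    simp
  rw [h1, ← h2]
  exact mul_le_mul_of_nonneg_right hm (Real.exp_pos _).le

lemma lv_exp_bound_left {d θ a z : ℝ} (hd : 0 < d) (haz : a ≤ z) {W DW : ℝ → ℝ}
    (hW : ∀ x, HasDerivAt W (DW x) x)
    (hineq : ∀ x ∈ Set.Ioo a z, 0 ≤ d * DW x + θ * W x) :
    ∀ x ∈ Set.Icc a z, W x ≤ W z * Real.exp (θ * (z - x) / d) := by
  intro x hx
  have hm := lv_exp_monoOn hd hW hineq hx (Set.mem_Icc.mpr ⟨haz, le_rfl⟩) hx.2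
  have h1 : W z * Real.exp (θ * (z - x) / d)
      = (W z * Real.exp (θ * z / d)) * Real.exp (-(θ * x / d)) := by
    rw [mul_assoc, ← Real.exp_add]
    congr 2
    ring
  have h2 : (W x * Real.exp (θ * x / d)) * Real.exp (-(θ * x / d)) = W x := by
    rw [mul_assoc, ← Real.exp_add]
    simp
  rw [h1, ← h2]
  exact mul_le_mul_of_nonneg_right hm (Real.exp_pos _).le

set_option maxHeartbeats 2000000 in
/-- Upper bound for `q(x) = d1 α u(x) + d2 β v(x)` for the unscaled two-species
Lotka-Volterra system under the bistable condition [BiS]. -/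
theorem lv_unscaled_upper_bound_q
    (d1 d2 σ1 σ2 c11 c12 c21 c22 θ α β : ℝ)
    (hd1 : 0 < d1) (hd2 : 0 < d2) (hσ1 : 0 < σ1) (hσ2 : 0 < σ2)
    (hc11 : 0 < c11) (hc12 : 0 < c12) (hc21 : 0 < c21) (hc22 : 0 < c22)
    (hBiS1 : σ1 / c11 > σ2 / c21) (hBiS2 : σ2 / c22 > σ1 / c12)
    (hα : 0 < α) (hβ : 0 < β)
    (u v : ℝ → ℝ)
    (hu : ContDiff ℝ 2 u) (hv : ContDiff ℝ 2 v)
    (hu0 : ∀ x, 0 ≤ u x) (hv0 : ∀ x, 0 ≤ v x)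
    (hequ : ∀ x, 0 ≤ d1 * deriv (deriv u) x + θ * deriv u x
      + u x * (σ1 - c11 * u x - c12 * v x))
    (heqv : ∀ x, 0 ≤ d2 * deriv (deriv v) x + θ * deriv v x
      + v x * (σ2 - c21 * u x - c22 * v x))
    (huM : Tendsto u atBot (nhds (σ1 / c11))) (hvM : Tendsto v atBot (nhds 0))
    (huP : Tendsto u atTop (nhds 0)) (hvP : Tendsto v atTop (nhds (σ2 / c22))) :
    ∀ x : ℝ,
      d1 * α * u x + d2 * β * v x
        ≤ max (α * σ1 / (c11 * d2)) (β * σ2 / (c22 * d1)) * max (d1 ^ 2) (d2 ^ 2) := by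
  -- regularity
  have hu11 : ContDiff ℝ (1 + 1) u := by exact_mod_cast hu
  have hv11 : ContDiff ℝ (1 + 1) v := by exact_mod_cast hv
  have hud : Differentiable ℝ u := hu.differentiable (by norm_num)
  have hvd : Differentiable ℝ v := hv.differentiable (by norm_num)
  have hud2 : Differentiable ℝ (deriv u) :=
    ((contDiff_succ_iff_deriv.mp hu11).2.2).differentiable (by norm_num)
  have hvd2 : Differentiable ℝ (deriv v) :=
    ((contDiff_succ_iff_deriv.mp hv11).2.2).differentiable (by norm_num)
  obtain ⟨du, hdu_def⟩ : ∃ f, f = deriv u := ⟨_, rfl⟩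
  obtain ⟨dv, hdv_def⟩ : ∃ f, f = deriv v := ⟨_, rfl⟩
  obtain ⟨ddu, hddu_def⟩ : ∃ f, f = deriv (deriv u) := ⟨_, rfl⟩
  obtain ⟨ddv, hddv_def⟩ : ∃ f, f = deriv (deriv v) := ⟨_, rfl⟩
  have hderu : ∀ x, HasDerivAt u (du x) x := by
    intro x; rw [hdu_def]; exact (hud x).hasDerivAt
  have hderv : ∀ x, HasDerivAt v (dv x) x := by
    intro x; rw [hdv_def]; exact (hvd x).hasDerivAt
  have hderdu : ∀ x, HasDerivAt du (ddu x) x := by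
    intro x; rw [hdu_def, hddu_def]; exact (hud2 x).hasDerivAt
  have hderdv : ∀ x, HasDerivAt dv (ddv x) x := by
    intro x; rw [hdv_def, hddv_def]; exact (hvd2 x).hasDerivAt
  have hequ' : ∀ x, 0 ≤ d1 * ddu x + θ * du x + u x * (σ1 - c11 * u x - c12 * v x) := by
    intro x; rw [hddu_def, hdu_def]; exact hequ x
  have heqv' : ∀ x, 0 ≤ d2 * ddv x + θ * dv x + v x * (σ2 - c21 * u x - c22 * v x) := by
    intro x; rw [hddv_def, hdv_def]; exact heqv x
  intro x₀
  by_contra hcon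
  push_neg at hcon
  -- constants
  set m := max d1 d2 with hm_def
  have hm1 : d1 ≤ m := le_max_left _ _
  have hm2 : d2 ≤ m := le_max_right _ _
  have hm0 : 0 < m := lt_of_lt_of_le hd1 hm1
  set K := max (α * σ1 / (c11 * d2)) (β * σ2 / (c22 * d1)) with hK_def
  have hmsq : max (d1 ^ 2) (d2 ^ 2) = m ^ 2 := by
    rcases le_total d1 d2 with h | h
    · rw [hm_def, max_eq_right h, max_eq_right (by nlinarith [h, hd1, hd2])]
    · rw [hm_def, max_eq_left h, max_eq_left (by nlinarith [h, hd1, hd2])]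
  rw [hmsq] at hcon
  have hK1 : α * σ1 ≤ K * (c11 * d2) := by
    have h := le_max_left (α * σ1 / (c11 * d2)) (β * σ2 / (c22 * d1))
    rw [div_le_iff₀ (by positivity)] at h
    linarith only [h]
  have hK2 : β * σ2 ≤ K * (c22 * d1) := by
    have h := le_max_right (α * σ1 / (c11 * d2)) (β * σ2 / (c22 * d1))
    rw [div_le_iff₀ (by positivity)] at h
    linarith only [h]
  have hK0 : 0 < K :=
    lt_of_lt_of_le (by positivity) (le_max_left (α * σ1 / (c11 * d2)) (β * σ2 / (c22 * d1)))
  set η := K * m with hη_def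
  have hb1 : σ2 * c11 < σ1 * c21 := by
    rw [gt_iff_lt, div_lt_div_iff₀ hc21 hc11] at hBiS1; linarith only [hBiS1]
  have hb2 : σ1 * c22 < σ2 * c12 := by
    rw [gt_iff_lt, div_lt_div_iff₀ hc12 hc22] at hBiS2; linarith only [hBiS2]
  have hKd2m : K * d2 ≤ K * m := mul_le_mul_of_nonneg_left hm2 hK0.le
  have hKd1m : K * d1 ≤ K * m := mul_le_mul_of_nonneg_left hm1 hK0.le
  have hA : α * σ1 ≤ c11 * η := by
    have h1 : c11 * (K * d2) ≤ c11 * (K * m) := mul_le_mul_of_nonneg_left hKd2m hc11.le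
    rw [hη_def]; linarith only [hK1, h1]
  have hD : β * σ2 ≤ c22 * η := by
    have h1 : c22 * (K * d1) ≤ c22 * (K * m) := mul_le_mul_of_nonneg_left hKd1m hc22.le
    rw [hη_def]; linarith only [hK2, h1]
  have hB : β * σ1 ≤ c12 * η := by
    have h1 : β * (σ1 * c22) ≤ β * (σ2 * c12) := mul_le_mul_of_nonneg_left hb2.le hβ.le
    have h2 : c12 * (β * σ2) ≤ c12 * (K * (c22 * d1)) := mul_le_mul_of_nonneg_left hK2 hc12.le
    have h3 : (c12 * c22) * (K * d1) ≤ (c12 * c22) * (K * m) :=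
      mul_le_mul_of_nonneg_left hKd1m (by positivity)
    have h4 : c22 * (β * σ1) ≤ c22 * (c12 * η) := by rw [hη_def]; linarith only [h1, h2, h3]
    exact le_of_mul_le_mul_left h4 hc22
  have hC : α * σ2 ≤ c21 * η := by
    have h1 : α * (σ2 * c11) ≤ α * (σ1 * c21) := mul_le_mul_of_nonneg_left hb1.le hα.le
    have h2 : c21 * (α * σ1) ≤ c21 * (K * (c11 * d2)) := mul_le_mul_of_nonneg_left hK1 hc21.le
    have h3 : (c21 * c11) * (K * d2) ≤ (c21 * c11) * (K * m) :=
      mul_le_mul_of_nonneg_left hKd2m (by positivity)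
    have h4 : c11 * (α * σ2) ≤ c11 * (c21 * η) := by rw [hη_def]; linarith only [h1, h2, h3]
    exact le_of_mul_le_mul_left h4 hc11
  -- functions
  obtain ⟨p, hp_def⟩ : ∃ f : ℝ → ℝ, f = fun x => α * u x + β * v x := ⟨_, rfl⟩
  obtain ⟨q, hq_def⟩ : ∃ f : ℝ → ℝ, f = fun x => d1 * (α * u x) + d2 * (β * v x) := ⟨_, rfl⟩
  have hpx_def : ∀ x, p x = α * u x + β * v x := fun x => by rw [hp_def]
  have hqx_def : ∀ x, q x = d1 * (α * u x) + d2 * (β * v x) := fun x => by rw [hq_def]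
  have hcon' : K * m ^ 2 < q x₀ := by
    rw [hqx_def]; linarith only [hcon]
  -- reaction signs
  have hreact1 : ∀ x : ℝ, η ≤ p x → u x * (σ1 - c11 * u x - c12 * v x) ≤ 0 := by
    intro x hx
    have hpx : η ≤ α * u x + β * v x := by rw [hpx_def] at hx; exact hx
    have h1 : α * σ1 ≤ α * (c11 * u x + c12 * v x) := by
      rcases le_total (β * c11) (α * c12) with h | h
      · have h2 : (β * c11) * v x ≤ (α * c12) * v x := mul_le_mul_of_nonneg_right h (hv0 x)
        have h3 : c11 * η ≤ c11 * (α * u x + β * v x) := mul_le_mul_of_nonneg_left hpx hc11.le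
        linarith only [hA, h2, h3]
      · have h2 : (α * c12) * u x ≤ (β * c11) * u x := mul_le_mul_of_nonneg_right h (hu0 x)
        have h2' : α * ((α * c12) * u x) ≤ α * ((β * c11) * u x) :=
          mul_le_mul_of_nonneg_left h2 hα.le
        have h3 : (α * c12) * η ≤ (α * c12) * (α * u x + β * v x) :=
          mul_le_mul_of_nonneg_left hpx (by positivity)
        have h4 : α * (β * σ1) ≤ α * (c12 * η) := mul_le_mul_of_nonneg_left hB hα.le
        have h6 : β * (α * σ1) ≤ β * (α * (c11 * u x + c12 * v x)) := by linarith only [h2', h3, h4]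
        exact le_of_mul_le_mul_left h6 hβ
    have h7 : σ1 - c11 * u x - c12 * v x ≤ 0 := by
      have := le_of_mul_le_mul_left h1 hα; linarith only [this]
    exact mul_nonpos_of_nonneg_of_nonpos (hu0 x) h7
  have hreact2 : ∀ x : ℝ, η ≤ p x → v x * (σ2 - c21 * u x - c22 * v x) ≤ 0 := by
    intro x hx
    have hpx : η ≤ α * u x + β * v x := by rw [hpx_def] at hx; exact hx
    have h1 : β * σ2 ≤ β * (c21 * u x + c22 * v x) := by
      rcases le_total (α * c22) (β * c21) with h | h
      · have h2 : (α * c22) * u x ≤ (β * c21) * u x := mul_le_mul_of_nonneg_right h (hu0 x)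
        have h3 : c22 * η ≤ c22 * (α * u x + β * v x) := mul_le_mul_of_nonneg_left hpx hc22.le
        linarith only [hD, h2, h3]
      · have h2 : (β * c21) * v x ≤ (α * c22) * v x := mul_le_mul_of_nonneg_right h (hv0 x)
        have h2' : β * ((β * c21) * v x) ≤ β * ((α * c22) * v x) :=
          mul_le_mul_of_nonneg_left h2 hβ.le
        have h3 : (β * c21) * η ≤ (β * c21) * (α * u x + β * v x) :=
          mul_le_mul_of_nonneg_left hpx (by positivity)
        have h4 : β * (α * σ2) ≤ β * (c21 * η) := mul_le_mul_of_nonneg_left hC hβ.le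
        have h6 : α * (β * σ2) ≤ α * (β * (c21 * u x + c22 * v x)) := by
          linarith only [h2', h3, h4]
        exact le_of_mul_le_mul_left h6 hα
    have h7 : σ2 - c21 * u x - c22 * v x ≤ 0 := by
      have := le_of_mul_le_mul_left h1 hβ; linarith only [this]
    exact mul_nonpos_of_nonneg_of_nonpos (hv0 x) h7
  -- continuity
  have hcont_p : Continuous p := by
    rw [hp_def]; exact (continuous_const.mul hud.continuous).add (continuous_const.mul hvd.continuous)
  have hcont_q : Continuous q := by
    rw [hq_def]
    exact (continuous_const.mul (continuous_const.mul hud.continuous)).add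
      (continuous_const.mul (continuous_const.mul hvd.continuous))
  -- limits of q
  have hqlimB : Tendsto q atBot (𝓝 (d1 * (α * (σ1 / c11)) + d2 * (β * 0))) := by
    rw [hq_def]
    exact ((huM.const_mul α).const_mul d1).add ((hvM.const_mul β).const_mul d2)
  have hqlimT : Tendsto q atTop (𝓝 (d1 * (α * 0) + d2 * (β * (σ2 / c22)))) := by
    rw [hq_def]
    exact ((huP.const_mul α).const_mul d1).add ((hvP.const_mul β).const_mul d2)
  have hαη1 : α * (σ1 / c11) ≤ η := by
    rw [show α * (σ1 / c11) = α * σ1 / c11 by ring]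
    exact (div_le_iff₀ hc11).mpr (by linarith only [hA])
  have hβη2 : β * (σ2 / c22) ≤ η := by
    rw [show β * (σ2 / c22) = β * σ2 / c22 by ring]
    exact (div_le_iff₀ hc22).mpr (by linarith only [hD])
  have hmη : m * η = K * m ^ 2 := by rw [hη_def]; ring
  have hη0 : 0 < η := by rw [hη_def]; exact mul_pos hK0 hm0
  have hqlB : d1 * (α * (σ1 / c11)) + d2 * (β * 0) < q x₀ := by
    have h1 : d1 * (α * (σ1 / c11)) ≤ d1 * η := mul_le_mul_of_nonneg_left hαη1 hd1.le
    have h2 : d1 * η ≤ m * η := mul_le_mul_of_nonneg_right hm1 hη0.le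
    rw [hmη] at h2; linarith only [hcon', h1, h2]
  have hqlT : d1 * (α * 0) + d2 * (β * (σ2 / c22)) < q x₀ := by
    have h1 : d2 * (β * (σ2 / c22)) ≤ d2 * η := mul_le_mul_of_nonneg_left hβη2 hd2.le
    have h2 : d2 * η ≤ m * η := mul_le_mul_of_nonneg_right hm2 hη0.le
    rw [hmη] at h2; linarith only [hcon', h1, h2]
  -- global max point z
  obtain ⟨A1, hA1⟩ := eventually_atBot.mp (hqlimB.eventually_lt_const hqlB)
  obtain ⟨B1, hB1⟩ := eventually_atTop.mp (hqlimT.eventually_lt_const hqlT)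
  have hx₀mem : x₀ ∈ Icc (min A1 x₀) (max B1 x₀) :=
    ⟨min_le_right _ _, le_max_right _ _⟩
  obtain ⟨z, hzmem, hzmax⟩ :=
    isCompact_Icc.exists_isMaxOn (s := Icc (min A1 x₀) (max B1 x₀)) ⟨x₀, hx₀mem⟩
      hcont_q.continuousOn
  have hzx₀ : q x₀ ≤ q z := hzmax hx₀mem
  have hzglob : ∀ x, q x ≤ q z := by
    intro x
    rcases le_or_gt x (min A1 x₀) with h | h
    · exact le_trans (hA1 x (le_trans h (min_le_left _ _))).le hzx₀
    rcases le_or_gt x (max B1 x₀) with h2 | h2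
    · exact hzmax ⟨h.le, h2⟩
    · exact le_trans (hB1 x (le_trans (le_max_left _ _) h2.le)).le hzx₀
  have hqz : m * η < q z := by rw [hmη]; exact lt_of_lt_of_le hcon' hzx₀
  -- derivative of q
  have hqder : ∀ x, HasDerivAt q (d1 * (α * du x) + d2 * (β * dv x)) x := by
    intro x
    rw [hq_def]
    exact (((hderu x).const_mul α).const_mul d1).add (((hderv x).const_mul β).const_mul d2)
  have hderivq0 : d1 * (α * du z) + d2 * (β * dv z) = 0 := by
    have h1 : IsLocalMax q z := Filter.Eventually.of_forall hzglob
    rw [← (hqder z).deriv]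
    exact h1.deriv_eq_zero
  -- the level η'
  have hηq : η < q z / m := (lt_div_iff₀ hm0).mpr (by linarith only [hqz])
  obtain ⟨η', hη'_def⟩ : ∃ t : ℝ, t = (η + q z / m) / 2 := ⟨_, rfl⟩
  have hη'1 : η < η' := by rw [hη'_def]; linarith only [hηq]
  have hη'2 : m * η' < q z := by
    have h1 : η' < q z / m := by rw [hη'_def]; linarith only [hηq]
    have h2 := (lt_div_iff₀ hm0).mp h1
    linarith only [h2]
  have hqmp : ∀ x, q x ≤ m * p x := by
    intro x
    rw [hqx_def, hpx_def]
    linarith only [mul_nonneg (sub_nonneg.mpr hm1) (mul_nonneg hα.le (hu0 x)),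
      mul_nonneg (sub_nonneg.mpr hm2) (mul_nonneg hβ.le (hv0 x))]
  have hpz : η' < p z := by
    have h1 := hqmp z
    have h2 : m * η' < m * p z := by linarith only [h1, hη'2]
    exact lt_of_mul_lt_mul_left h2 hm0.le
  -- limits of p
  have hplimB : Tendsto p atBot (𝓝 (α * (σ1 / c11) + β * 0)) := by
    rw [hp_def]; exact (huM.const_mul α).add (hvM.const_mul β)
  have hplimT : Tendsto p atTop (𝓝 (α * 0 + β * (σ2 / c22))) := by
    rw [hp_def]; exact (huP.const_mul α).add (hvP.const_mul β)
  have hplB : α * (σ1 / c11) + β * 0 < η' := by linarith only [hαη1, hη'1]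
  have hplT : α * 0 + β * (σ2 / c22) < η' := by linarith only [hβη2, hη'1]
  -- right boundary b
  obtain ⟨B2, hB2⟩ := eventually_atTop.mp (hplimT.eventually_lt_const hplT)
  obtain ⟨Sb, hSb_def⟩ : ∃ S : Set ℝ, S = {x : ℝ | z ≤ x ∧ p x ≤ η'} := ⟨_, rfl⟩
  have hSb_ne : Sb.Nonempty := by
    refine ⟨max z B2, ?_⟩
    rw [hSb_def]
    exact ⟨le_max_left _ _, (hB2 _ (le_max_right _ _)).le⟩
  have hSb_bdd : BddBelow Sb := by
    refine ⟨z, fun x hx => ?_⟩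
    rw [hSb_def] at hx; exact hx.1
  have hSb_cl : IsClosed Sb := by
    rw [hSb_def, Set.setOf_and]
    exact (isClosed_le continuous_const continuous_id).inter
      (isClosed_le hcont_p continuous_const)
  obtain ⟨b, hb_def⟩ : ∃ t : ℝ, t = sInf Sb := ⟨_, rfl⟩
  have hbmem : z ≤ b ∧ p b ≤ η' := by
    have h1 : b ∈ Sb := by rw [hb_def]; exact hSb_cl.csInf_mem hSb_ne hSb_bdd
    rw [hSb_def] at h1; exact h1
  have hzb : z < b := by
    rcases lt_or_eq_of_le hbmem.1 with h | h
    · exact h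
    · exfalso; rw [← h] at hbmem; linarith only [hbmem.2, hpz]
  have hbint : ∀ x, z ≤ x → x < b → η' < p x := by
    intro x h1 h2
    by_contra h3
    push_neg at h3
    have h4 : x ∈ Sb := by rw [hSb_def]; exact ⟨h1, h3⟩
    have h5 := csInf_le hSb_bdd h4
    rw [← hb_def] at h5
    linarith only [h5, h2]
  have hpb : p b = η' := by
    refine le_antisymm hbmem.2 ?_
    by_contra h3
    push_neg at h3
    have hc := hcont_p.continuousAt (x := b)
    rw [Metric.continuousAt_iff] at hc
    obtain ⟨δ, hδ0, hδ⟩ := hc (η' - p b) (by linarith only [h3])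
    have hy2 : max z (b - δ / 2) < b := max_lt hzb (by linarith only [hδ0])
    have hy3 : dist (max z (b - δ / 2)) b < δ := by
      rw [Real.dist_eq, abs_lt]
      constructor
      · have := le_max_right z (b - δ / 2); linarith only [this, hδ0]
      · linarith only [hy2, hδ0]
    have h6 := hδ hy3
    rw [Real.dist_eq] at h6
    have h7 : p (max z (b - δ / 2)) < η' := by
      rcases abs_lt.mp h6 with ⟨h8, h9⟩; linarith only [h9]
    exact absurd h7 (not_lt.mpr (hbint _ (le_max_left _ _) hy2).le)
  -- left boundary a
  obtain ⟨A2, hA2⟩ := eventually_atBot.mp (hplimB.eventually_lt_const hplB)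
  obtain ⟨Sa, hSa_def⟩ : ∃ S : Set ℝ, S = {x : ℝ | x ≤ z ∧ p x ≤ η'} := ⟨_, rfl⟩
  have hSa_ne : Sa.Nonempty := by
    refine ⟨min z A2, ?_⟩
    rw [hSa_def]
    exact ⟨min_le_left _ _, (hA2 _ (min_le_right _ _)).le⟩
  have hSa_bdd : BddAbove Sa := by
    refine ⟨z, fun x hx => ?_⟩
    rw [hSa_def] at hx; exact hx.1
  have hSa_cl : IsClosed Sa := by
    rw [hSa_def, Set.setOf_and]
    exact (isClosed_le continuous_id continuous_const).inter
      (isClosed_le hcont_p continuous_const)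
  obtain ⟨a, ha_def⟩ : ∃ t : ℝ, t = sSup Sa := ⟨_, rfl⟩
  have hamem : a ≤ z ∧ p a ≤ η' := by
    have h1 : a ∈ Sa := by rw [ha_def]; exact hSa_cl.csSup_mem hSa_ne hSa_bdd
    rw [hSa_def] at h1; exact h1
  have haz : a < z := by
    rcases lt_or_eq_of_le hamem.1 with h | h
    · exact h
    · exfalso; rw [h] at hamem; linarith only [hamem.2, hpz]
  have haint : ∀ x, a < x → x ≤ z → η' < p x := by
    intro x h1 h2
    by_contra h3
    push_neg at h3
    have h4 : x ∈ Sa := by rw [hSa_def]; exact ⟨h2, h3⟩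
    have h5 := le_csSup hSa_bdd h4
    rw [← ha_def] at h5
    linarith only [h5, h1]
  have hpa : p a = η' := by
    refine le_antisymm hamem.2 ?_
    by_contra h3
    push_neg at h3
    have hc := hcont_p.continuousAt (x := a)
    rw [Metric.continuousAt_iff] at hc
    obtain ⟨δ, hδ0, hδ⟩ := hc (η' - p a) (by linarith only [h3])
    have hy2 : a < min z (a + δ / 2) := lt_min haz (by linarith only [hδ0])
    have hy3 : dist (min z (a + δ / 2)) a < δ := by
      rw [Real.dist_eq, abs_lt]
      constructor
      · linarith only [hy2, hδ0]
      · have := min_le_right z (a + δ / 2); linarith only [this, hδ0]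
    have h6 := hδ hy3
    rw [Real.dist_eq] at h6
    have h7 : p (min z (a + δ / 2)) < η' := by
      rcases abs_lt.mp h6 with ⟨h8, h9⟩; linarith only [h9]
    exact absurd h7 (not_lt.mpr (haint _ hy2 (min_le_left _ _)).le)
  -- species-wise differential inequalities on the two lateral intervals
  have hIneq1R : ∀ x ∈ Ioo z b, 0 ≤ d1 * ddu x + θ * du x := by
    intro x hx
    have hη : η ≤ p x := (lt_trans hη'1 (hbint x hx.1.le hx.2)).le
    linarith only [hequ' x, hreact1 x hη]
  have hIneq2R : ∀ x ∈ Ioo z b, 0 ≤ d2 * ddv x + θ * dv x := by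
    intro x hx
    have hη : η ≤ p x := (lt_trans hη'1 (hbint x hx.1.le hx.2)).le
    linarith only [heqv' x, hreact2 x hη]
  have hIneq1L : ∀ x ∈ Ioo a z, 0 ≤ d1 * ddu x + θ * du x := by
    intro x hx
    have hη : η ≤ p x := (lt_trans hη'1 (haint x hx.1 hx.2.le)).le
    linarith only [hequ' x, hreact1 x hη]
  have hIneq2L : ∀ x ∈ Ioo a z, 0 ≤ d2 * ddv x + θ * dv x := by
    intro x hx
    have hη : η ≤ p x := (lt_trans hη'1 (haint x hx.1 hx.2.le)).le
    linarith only [heqv' x, hreact2 x hη]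
  -- exponential bounds on derivatives
  have hexpR1 := lv_exp_bound_right hd1 hzb.le hderdu hIneq1R
  have hexpR2 := lv_exp_bound_right hd2 hzb.le hderdv hIneq2R
  have hexpL1 := lv_exp_bound_left hd1 haz.le hderdu hIneq1L
  have hexpL2 := lv_exp_bound_left hd2 haz.le hderdv hIneq2L
  -- derivative of p
  have hpder : ∀ x, HasDerivAt p (α * du x + β * dv x) x := by
    intro x; rw [hp_def]; exact ((hderu x).const_mul α).add ((hderv x).const_mul β)
  -- the auxiliary function G = q' + θ p
  obtain ⟨G, hG_def⟩ : ∃ g : ℝ → ℝ,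
      g = fun x => (d1 * (α * du x) + d2 * (β * dv x)) + θ * p x := ⟨_, rfl⟩
  have hGx : ∀ x, G x = (d1 * (α * du x) + d2 * (β * dv x)) + θ * p x :=
    fun x => by rw [hG_def]
  have hGder : ∀ x, HasDerivAt G
      ((d1 * (α * ddu x) + d2 * (β * ddv x)) + θ * (α * du x + β * dv x)) x := by
    intro x
    rw [hG_def]
    have h1 : HasDerivAt (fun x => d1 * (α * du x) + d2 * (β * dv x))
        (d1 * (α * ddu x) + d2 * (β * ddv x)) x :=
      (((hderdu x).const_mul α).const_mul d1).add (((hderdv x).const_mul β).const_mul d2)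
    exact h1.add ((hpder x).const_mul θ)
  have hGmono : ∀ c e : ℝ, c ≤ e → (∀ x ∈ Ioo c e, η ≤ p x) → MonotoneOn G (Icc c e) := by
    intro c e hce hin
    refine monotoneOn_of_deriv_nonneg (convex_Icc c e)
      ((Differentiable.continuous (fun x => (hGder x).differentiableAt)).continuousOn)
      (fun x _ => (hGder x).differentiableAt.differentiableWithinAt) ?_
    intro x hx
    rw [interior_Icc] at hx
    rw [(hGder x).deriv]
    have t1 := mul_nonneg hα.le (hequ' x)
    have t2 := mul_nonneg hβ.le (heqv' x)
    have t3 := mul_nonpos_of_nonneg_of_nonpos hα.le (hreact1 x (hin x hx))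
    have t4 := mul_nonpos_of_nonneg_of_nonpos hβ.le (hreact2 x (hin x hx))
    linarith only [t1, t2, t3, t4]
  -- q at the boundary points
  have hqb : q b ≤ m * η' := by rw [← hpb]; exact hqmp b
  have hqa : q a ≤ m * η' := by rw [← hpa]; exact hqmp a
  -- the monotone-q contradiction (used when the exponential comparison has a sign)
  have caseMono : ¬ (∀ x ∈ Ioo z b,
      0 ≤ (d1 * (α * du z)) * (Real.exp (θ * (z - x) / d1) - Real.exp (θ * (z - x) / d2))) := by
    intro hkey
    have hqmono : MonotoneOn q (Icc z b) := by
      refine monotoneOn_of_deriv_nonneg (convex_Icc z b) hcont_q.continuousOn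
        (fun x _ => (hqder x).differentiableAt.differentiableWithinAt) ?_
      intro x hx
      rw [interior_Icc] at hx
      rw [(hqder x).deriv]
      have hIx : x ∈ Icc z b := ⟨hx.1.le, hx.2.le⟩
      have m1 : (d1 * α) * (du z * Real.exp (θ * (z - x) / d1)) ≤ (d1 * α) * du x :=
        mul_le_mul_of_nonneg_left (hexpR1 x hIx) (by positivity)
      have m2 : (d2 * β) * (dv z * Real.exp (θ * (z - x) / d2)) ≤ (d2 * β) * dv x :=
        mul_le_mul_of_nonneg_left (hexpR2 x hIx) (by positivity)
      have h5 : (d2 * (β * dv z)) * Real.exp (θ * (z - x) / d2)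
          = (-(d1 * (α * du z))) * Real.exp (θ * (z - x) / d2) := by
        rw [show d2 * (β * dv z) = -(d1 * (α * du z)) by linarith only [hderivq0]]
      linarith only [m1, m2, h5, hkey x hx]
    have hc1 : q z ≤ q b :=
      hqmono (Set.mem_Icc.mpr ⟨le_rfl, hzb.le⟩) (Set.mem_Icc.mpr ⟨hzb.le, le_rfl⟩) hzb.le
    linarith only [hqb, hη'2, hc1]
  -- case analysis
  rcases lt_trichotomy (du z) 0 with hvz | hvz | hvz
  · -- du z < 0, hence dv z > 0
    have hdvz : 0 < dv z := by
      have h1 : 0 < (d1 * α) * (-du z) := mul_pos (mul_pos hd1 hα) (neg_pos.mpr hvz)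
      by_contra hcc
      push_neg at hcc
      have h2 : d2 * (β * dv z) ≤ 0 :=
        mul_nonpos_of_nonneg_of_nonpos hd2.le (mul_nonpos_of_nonneg_of_nonpos hβ.le hcc)
      linarith only [hderivq0, h1, h2]
    rcases lt_trichotomy (θ * (d2 - d1)) 0 with hσ | hσ | hσ
    · -- CASE B : du z < 0, θ(d2-d1) < 0
      rcases lt_trichotomy θ 0 with hθ | hθ | hθ
      · -- θ < 0 forces d1 < d2 ; work on [a, z]
        have hd12 : d1 < d2 := by
          by_contra hcc
          push_neg at hcc
          have h2 : 0 ≤ θ * (d2 - d1) := by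
            have := mul_nonneg (neg_nonneg.mpr hθ.le) (by linarith only [hcc] : 0 ≤ d1 - d2)
            linarith only [this]
          linarith only [hσ, h2]
        have hdua : du a < 0 :=
          lt_of_le_of_lt (hexpL1 a (Set.mem_Icc.mpr ⟨le_rfl, haz.le⟩))
            (mul_neg_of_neg_of_pos hvz (Real.exp_pos _))
        have hp'a : 0 ≤ α * du a + β * dv a :=
          lv_deriv_nonneg_of_right_min (hpder a) haz
            (fun x h1 h2 => by rw [hpa]; exact (haint x h1 h2).le)
        have hq'a : 0 < d1 * (α * du a) + d2 * (β * dv a) := by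
          have h1 : d2 * (-(α * du a)) ≤ d2 * (β * dv a) :=
            mul_le_mul_of_nonneg_left (by linarith only [hp'a]) hd2.le
          have h2 : 0 < (d2 - d1) * (α * (-du a)) :=
            mul_pos (sub_pos.mpr hd12) (mul_pos hα (neg_pos.mpr hdua))
          linarith only [h1, h2]
        have hGm := hGmono a z haz.le
          (fun x hx => (lt_trans hη'1 (haint x hx.1 hx.2.le)).le)
        have hGa := hGm (Set.mem_Icc.mpr ⟨le_rfl, haz.le⟩)
          (Set.mem_Icc.mpr ⟨haz.le, le_rfl⟩) haz.le
        rw [hGx a, hGx z, hpa] at hGa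
        have hneg : θ * (p z - η') < 0 := mul_neg_of_neg_of_pos hθ (sub_pos.mpr hpz)
        linarith only [hGa, hderivq0, hq'a, hneg]
      · exfalso; rw [hθ] at hσ; simp at hσ
      · -- θ > 0 forces d2 < d1 ; work on [z, b]
        have hd21 : d2 < d1 := by
          by_contra hcc
          push_neg at hcc
          have h2 : 0 ≤ θ * (d2 - d1) :=
            mul_nonneg hθ.le (by linarith only [hcc])
          linarith only [hσ, h2]
        have hdvb : 0 < dv b :=
          lt_of_lt_of_le (mul_pos hdvz (Real.exp_pos _))
            (hexpR2 b (Set.mem_Icc.mpr ⟨hzb.le, le_rfl⟩))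
        have hp'b : α * du b + β * dv b ≤ 0 :=
          lv_deriv_nonpos_of_left_min (hpder b) hzb
            (fun x h1 h2 => by rw [hpb]; exact (hbint x h1 h2).le)
        have hq'b : d1 * (α * du b) + d2 * (β * dv b) < 0 := by
          have h1 : d1 * (α * du b) ≤ d1 * (-(β * dv b)) :=
            mul_le_mul_of_nonneg_left (by linarith only [hp'b]) hd1.le
          have h2 : 0 < (d1 - d2) * (β * dv b) :=
            mul_pos (sub_pos.mpr hd21) (mul_pos hβ hdvb)
          linarith only [h1, h2]
        have hGm := hGmono z b hzb.le
          (fun x hx => (lt_trans hη'1 (hbint x hx.1.le hx.2)).le)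
        have hGb := hGm (Set.mem_Icc.mpr ⟨le_rfl, hzb.le⟩)
          (Set.mem_Icc.mpr ⟨hzb.le, le_rfl⟩) hzb.le
        rw [hGx z, hGx b, hpb] at hGb
        have hposs : 0 < θ * (p z - η') := mul_pos hθ (sub_pos.mpr hpz)
        linarith only [hGb, hderivq0, hq'b, hposs]
    · -- θ(d2-d1) = 0 : exponentials compare, factor ≤ 0
      apply caseMono
      intro x hx
      have hle : Real.exp (θ * (z - x) / d1) ≤ Real.exp (θ * (z - x) / d2) := by
        apply Real.exp_le_exp.mpr
        rw [div_le_div_iff₀ hd1 hd2]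
        have h0 : (z - x) * (θ * (d2 - d1)) = 0 := by rw [hσ]; ring
        linarith only [h0]
      have hf1 : d1 * (α * du z) ≤ 0 :=
        mul_nonpos_of_nonneg_of_nonpos hd1.le (mul_nonpos_of_nonneg_of_nonpos hα.le hvz.le)
      have hf2 := mul_nonneg (neg_nonneg.mpr hf1) (sub_nonneg.mpr hle)
      linarith only [hf2]
    · -- θ(d2-d1) > 0 with du z < 0 : CASE 2
      apply caseMono
      intro x hx
      have hle : Real.exp (θ * (z - x) / d1) ≤ Real.exp (θ * (z - x) / d2) := by
        apply Real.exp_le_exp.mpr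
        rw [div_le_div_iff₀ hd1 hd2]
        have h0 : 0 ≤ (x - z) * (θ * (d2 - d1)) :=
          mul_nonneg (sub_nonneg.mpr hx.1.le) hσ.le
        linarith only [h0]
      have hf1 : d1 * (α * du z) ≤ 0 :=
        mul_nonpos_of_nonneg_of_nonpos hd1.le (mul_nonpos_of_nonneg_of_nonpos hα.le hvz.le)
      have hf2 := mul_nonneg (neg_nonneg.mpr hf1) (sub_nonneg.mpr hle)
      linarith only [hf2]
  · -- du z = 0 : degenerate, factor vanishes
    apply caseMono
    intro x hx
    rw [hvz]
    simp
  · -- du z > 0, hence dv z < 0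
    have hdvz : dv z < 0 := by
      have h1 : 0 < (d1 * α) * du z := mul_pos (mul_pos hd1 hα) hvz
      by_contra hcc
      push_neg at hcc
      have h2 : 0 ≤ d2 * (β * dv z) :=
        mul_nonneg hd2.le (mul_nonneg hβ.le hcc)
      linarith only [hderivq0, h1, h2]
    rcases lt_trichotomy (θ * (d2 - d1)) 0 with hσ | hσ | hσ
    · -- θ(d2-d1) < 0 with du z > 0 : CASE 1
      apply caseMono
      intro x hx
      have hle : Real.exp (θ * (z - x) / d2) ≤ Real.exp (θ * (z - x) / d1) := by
        apply Real.exp_le_exp.mpr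
        rw [div_le_div_iff₀ hd2 hd1]
        have h0 : 0 ≤ (x - z) * (-(θ * (d2 - d1))) :=
          mul_nonneg (sub_nonneg.mpr hx.1.le) (by linarith only [hσ])
        linarith only [h0]
      have hf1 : 0 ≤ d1 * (α * du z) :=
        mul_nonneg hd1.le (mul_nonneg hα.le hvz.le)
      have hf2 := mul_nonneg hf1 (sub_nonneg.mpr hle)
      linarith only [hf2]
    · -- θ(d2-d1) = 0 with du z > 0 : CASE 1
      apply caseMono
      intro x hx
      have hle : Real.exp (θ * (z - x) / d2) ≤ Real.exp (θ * (z - x) / d1) := by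
        apply Real.exp_le_exp.mpr
        rw [div_le_div_iff₀ hd2 hd1]
        have h0 : (z - x) * (θ * (d2 - d1)) = 0 := by rw [hσ]; ring
        linarith only [h0]
      have hf1 : 0 ≤ d1 * (α * du z) :=
        mul_nonneg hd1.le (mul_nonneg hα.le hvz.le)
      have hf2 := mul_nonneg hf1 (sub_nonneg.mpr hle)
      linarith only [hf2]
    · -- CASE A : du z > 0, θ(d2-d1) > 0
      rcases lt_trichotomy θ 0 with hθ | hθ | hθ
      · -- θ < 0 forces d2 < d1 ; work on [a, z]
        have hd21 : d2 < d1 := by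
          by_contra hcc
          push_neg at hcc
          have h2 : θ * (d2 - d1) ≤ 0 :=
            mul_nonpos_of_nonpos_of_nonneg hθ.le (by linarith only [hcc])
          linarith only [hσ, h2]
        have hdva : dv a < 0 :=
          lt_of_le_of_lt (hexpL2 a (Set.mem_Icc.mpr ⟨le_rfl, haz.le⟩))
            (mul_neg_of_neg_of_pos hdvz (Real.exp_pos _))
        have hp'a : 0 ≤ α * du a + β * dv a :=
          lv_deriv_nonneg_of_right_min (hpder a) haz
            (fun x h1 h2 => by rw [hpa]; exact (haint x h1 h2).le)
        have hq'a : 0 < d1 * (α * du a) + d2 * (β * dv a) := by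
          have h1 : d1 * (-(β * dv a)) ≤ d1 * (α * du a) :=
            mul_le_mul_of_nonneg_left (by linarith only [hp'a]) hd1.le
          have h2 : 0 < (d1 - d2) * (β * (-dv a)) :=
            mul_pos (sub_pos.mpr hd21) (mul_pos hβ (neg_pos.mpr hdva))
          linarith only [h1, h2]
        have hGm := hGmono a z haz.le
          (fun x hx => (lt_trans hη'1 (haint x hx.1 hx.2.le)).le)
        have hGa := hGm (Set.mem_Icc.mpr ⟨le_rfl, haz.le⟩)
          (Set.mem_Icc.mpr ⟨haz.le, le_rfl⟩) haz.le
        rw [hGx a, hGx z, hpa] at hGa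
        have hneg : θ * (p z - η') < 0 := mul_neg_of_neg_of_pos hθ (sub_pos.mpr hpz)
        linarith only [hGa, hderivq0, hq'a, hneg]
      · exfalso; rw [hθ] at hσ; simp at hσ
      · -- θ > 0 forces d1 < d2 ; work on [z, b]
        have hd12 : d1 < d2 := by
          by_contra hcc
          push_neg at hcc
          have h2 : θ * (d2 - d1) ≤ 0 :=
            mul_nonpos_of_nonneg_of_nonpos hθ.le (by linarith only [hcc])
          linarith only [hσ, h2]
        have hdub : 0 < du b :=
          lt_of_lt_of_le (mul_pos hvz (Real.exp_pos _))
            (hexpR1 b (Set.mem_Icc.mpr ⟨hzb.le, le_rfl⟩))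
        have hp'b : α * du b + β * dv b ≤ 0 :=
          lv_deriv_nonpos_of_left_min (hpder b) hzb
            (fun x h1 h2 => by rw [hpb]; exact (hbint x h1 h2).le)
        have hq'b : d1 * (α * du b) + d2 * (β * dv b) < 0 := by
          have h1 : d2 * (β * dv b) ≤ d2 * (-(α * du b)) :=
            mul_le_mul_of_nonneg_left (by linarith only [hp'b]) hd2.le
          have h2 : 0 < (d2 - d1) * (α * du b) :=
            mul_pos (sub_pos.mpr hd12) (mul_pos hα hdub)
          linarith only [h1, h2]
        have hGm := hGmono z b hzb.le
          (fun x hx => (lt_trans hη'1 (hbint x hx.1.le hx.2)).le)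
        have hGb := hGm (Set.mem_Icc.mpr ⟨le_rfl, hzb.le⟩)
          (Set.mem_Icc.mpr ⟨hzb.le, le_rfl⟩) hzb.le
        rw [hGx z, hGx b, hpb] at hGb
        have hposs : 0 < θ * (p z - η') := mul_pos hθ (sub_pos.mpr hpz)
        linarith only [hGb, hderivq0, hq'b, hposs]
end

section
/- Let d1, d2, σ1, σ2 and c11, c12, c21, c22 be positive constants satisfying the bistable condition σ1/c11 > σ2/c21 and σ2/c22 > σ1/c12, let θ ∈ ℝ, and let α > 0, β > 0 be arbitrary constants. Suppose (u, v) is a pair of nonnegative C² functions on ℝ satisfying d1 u'' + θ u' + u(σ1 − c11 u − c12 v) = 0 and d2 v'' + θ v' + v(σ2 − c21 u − c22 v) = 0 on ℝ, with (u,v)(x) → (σ1/c11, 0) as x → −∞ and (u,v)(x) → (0, σ2/c22) as x → +∞. Then q(x) = d1 α u(x) + d2 β v(x) satisfies min[α σ2/(c21 d2), β σ1/(c12 d1)] · min[d1², d2²] ≤ q(x) ≤ max[α σ1/(c11 d2), β σ2/(c22 d1)] · max[d1², d2²] for every x ∈ ℝ. -/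
open Filter Set

lemma aux_deriv_right_nonpos (f : ℝ → ℝ) {a c : ℝ} (hf : DifferentiableAt ℝ f a) (hac : a < c)
    (h : ∀ x ∈ Set.Ioc a c, f x ≤ f a) : deriv f a ≤ 0 := by
  have H : Tendsto (slope f a) (nhdsWithin a (Set.Ioi a)) (nhds (deriv f a)) :=
    (hasDerivAt_iff_tendsto_slope.mp hf.hasDerivAt).mono_left
      (nhdsWithin_mono a fun x hx => Set.mem_compl_singleton_iff.mpr (ne_of_gt hx))
  refine le_of_tendsto H ?_
  filter_upwards [Ioc_mem_nhdsGT_of_mem (Set.mem_Ico.mpr ⟨le_refl a, hac⟩)] with x hx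
  rw [slope_def_field]
  exact div_nonpos_of_nonpos_of_nonneg (by linarith [h x hx]) (by linarith [hx.1])

lemma aux_deriv_right_nonneg (f : ℝ → ℝ) {a c : ℝ} (hf : DifferentiableAt ℝ f a) (hac : a < c)
    (h : ∀ x ∈ Set.Ioc a c, f a ≤ f x) : 0 ≤ deriv f a := by
  have H : Tendsto (slope f a) (nhdsWithin a (Set.Ioi a)) (nhds (deriv f a)) :=
    (hasDerivAt_iff_tendsto_slope.mp hf.hasDerivAt).mono_left
      (nhdsWithin_mono a fun x hx => Set.mem_compl_singleton_iff.mpr (ne_of_gt hx))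
  refine ge_of_tendsto H ?_
  filter_upwards [Ioc_mem_nhdsGT_of_mem (Set.mem_Ico.mpr ⟨le_refl a, hac⟩)] with x hx
  rw [slope_def_field]
  exact div_nonneg (by linarith [h x hx]) (by linarith [hx.1])

lemma aux_deriv_left_nonneg (f : ℝ → ℝ) {b c : ℝ} (hf : DifferentiableAt ℝ f b) (hcb : c < b)
    (h : ∀ x ∈ Set.Ico c b, f x ≤ f b) : 0 ≤ deriv f b := by
  have H : Tendsto (slope f b) (nhdsWithin b (Set.Iio b)) (nhds (deriv f b)) :=
    (hasDerivAt_iff_tendsto_slope.mp hf.hasDerivAt).mono_left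
      (nhdsWithin_mono b fun x hx => Set.mem_compl_singleton_iff.mpr (ne_of_lt hx))
  refine ge_of_tendsto H ?_
  filter_upwards [Ico_mem_nhdsLT_of_mem (Set.mem_Ioc.mpr ⟨hcb, le_refl b⟩)] with x hx
  rw [slope_def_field]
  exact div_nonneg_of_nonpos (by linarith [h x hx]) (by linarith [hx.2])

lemma aux_deriv_left_nonpos (f : ℝ → ℝ) {b c : ℝ} (hf : DifferentiableAt ℝ f b) (hcb : c < b)
    (h : ∀ x ∈ Set.Ico c b, f b ≤ f x) : deriv f b ≤ 0 := by
  have H : Tendsto (slope f b) (nhdsWithin b (Set.Iio b)) (nhds (deriv f b)) :=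
    (hasDerivAt_iff_tendsto_slope.mp hf.hasDerivAt).mono_left
      (nhdsWithin_mono b fun x hx => Set.mem_compl_singleton_iff.mpr (ne_of_lt hx))
  refine le_of_tendsto H ?_
  filter_upwards [Ico_mem_nhdsLT_of_mem (Set.mem_Ioc.mpr ⟨hcb, le_refl b⟩)] with x hx
  rw [slope_def_field]
  exact div_nonpos_of_nonneg_of_nonpos (by linarith [h x hx]) (by linarith [hx.2])

lemma aux_level_left (Q : ℝ → ℝ) (hQ : Continuous Q) {c η : ℝ} (hc : Q c < η)
    (hex : ∃ x, x ≤ c ∧ η ≤ Q x) :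
    ∃ a, a < c ∧ Q a = η ∧ ∀ x ∈ Set.Ioc a c, Q x < η := by
  set S := Set.Iic c ∩ Q ⁻¹' Set.Ici η with hS
  have hSne : S.Nonempty := by
    obtain ⟨x, hx1, hx2⟩ := hex; exact ⟨x, hx1, hx2⟩
  have hSb : BddAbove S := ⟨c, fun x hx => hx.1⟩
  have hSc : IsClosed S := isClosed_Iic.inter (isClosed_Ici.preimage hQ)
  have haS : sSup S ∈ S := hSc.csSup_mem hSne hSb
  set a := sSup S with ha
  have hac : a < c := lt_of_le_of_ne haS.1 (by
    intro h; rw [h] at haS; exact absurd haS.2 (not_le.mpr hc))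
  have hin : ∀ x ∈ Set.Ioc a c, Q x < η := by
    intro x hx
    by_contra hge; push_neg at hge
    exact absurd (le_csSup hSb ⟨hx.2, hge⟩) (not_le.mpr hx.1)
  refine ⟨a, hac, le_antisymm ?_ haS.2, hin⟩
  have hT : Tendsto Q (nhdsWithin a (Set.Ioi a)) (nhds (Q a)) :=
    hQ.continuousAt.continuousWithinAt
  refine le_of_tendsto hT ?_
  filter_upwards [Ioc_mem_nhdsGT_of_mem (Set.mem_Ico.mpr ⟨le_refl a, hac⟩)] with x hx
  exact (hin x hx).le

lemma aux_level_right (Q : ℝ → ℝ) (hQ : Continuous Q) {c η : ℝ} (hc : Q c < η)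
    (hex : ∃ x, c ≤ x ∧ η ≤ Q x) :
    ∃ b, c < b ∧ Q b = η ∧ ∀ x ∈ Set.Ico c b, Q x < η := by
  set S := Set.Ici c ∩ Q ⁻¹' Set.Ici η with hS
  have hSne : S.Nonempty := by
    obtain ⟨x, hx1, hx2⟩ := hex; exact ⟨x, hx1, hx2⟩
  have hSb : BddBelow S := ⟨c, fun x hx => hx.1⟩
  have hSc : IsClosed S := isClosed_Ici.inter (isClosed_Ici.preimage hQ)
  have haS : sInf S ∈ S := hSc.csInf_mem hSne hSb
  set b := sInf S with hb
  have hcb : c < b := lt_of_le_of_ne haS.1 (by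
    intro h; rw [← h] at haS; exact absurd haS.2 (not_le.mpr hc))
  have hin : ∀ x ∈ Set.Ico c b, Q x < η := by
    intro x hx
    by_contra hge; push_neg at hge
    exact absurd (csInf_le hSb ⟨hx.1, hge⟩) (not_le.mpr hx.2)
  refine ⟨b, hcb, le_antisymm ?_ haS.2, hin⟩
  have hT : Tendsto Q (nhdsWithin b (Set.Iio b)) (nhds (Q b)) :=
    hQ.continuousAt.continuousWithinAt
  refine le_of_tendsto hT ?_
  filter_upwards [Ico_mem_nhdsLT_of_mem (Set.mem_Ioc.mpr ⟨hcb, le_refl b⟩)] with x hx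
  exact (hin x hx).le

lemma aux_lowbar (Q P : ℝ → ℝ) (θ η dmin dmax : ℝ)
    (hdmin : 0 < dmin) (hmm : dmin ≤ dmax) (hη : 0 < η)
    (hQd : Differentiable ℝ Q)
    (hWd : Differentiable ℝ (fun x => deriv Q x + θ * P x))
    (hPQ1 : ∀ x, dmin * P x ≤ Q x) (hPQ2 : ∀ x, Q x ≤ dmax * P x)
    (hder : ∀ x, Q x ≤ η → deriv (fun x => deriv Q x + θ * P x) x ≤ 0)
    (hbot : ∀ᶠ x in atBot, η < Q x) (htop : ∀ᶠ x in atTop, η < Q x)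
    (z : ℝ) : η * dmin / dmax ≤ Q z := by
  set W : ℝ → ℝ := fun x => deriv Q x + θ * P x with hWdef
  by_contra hcon
  push_neg at hcon
  have hdmax0 : 0 < dmax := lt_of_lt_of_le hdmin hmm
  have hl1eta : η * dmin / dmax ≤ η := by
    rw [div_le_iff₀ hdmax0]; nlinarith
  have hQzη : Q z < η := lt_of_lt_of_le hcon hl1eta
  obtain ⟨R1, hR1⟩ := eventually_atBot.mp hbot
  obtain ⟨R2, hR2⟩ := eventually_atTop.mp htop
  set A := min R1 z - 1 with hA
  set B := max R2 z + 1 with hB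
  have hAz : A < z := by
    have := min_le_right R1 z; simp only [hA]; linarith
  have hzB : z < B := by
    have := le_max_right R2 z; simp only [hB]; linarith
  have hQA : η < Q A := hR1 A (by have := min_le_left R1 z; simp only [hA]; linarith)
  have hQB : η < Q B := hR2 B (by have := le_max_left R2 z; simp only [hB]; linarith)
  obtain ⟨c, hcmem, hcmin⟩ := isCompact_Icc.exists_isMinOn
    (Set.nonempty_Icc.mpr (hAz.le.trans hzB.le)) (hQd.continuous.continuousOn (s := Set.Icc A B))
  have hQcz : Q c ≤ Q z := isMinOn_iff.mp hcmin z (Set.mem_Icc.mpr ⟨hAz.le, hzB.le⟩)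
  have hQcη : Q c < η := lt_of_le_of_lt hQcz hQzη
  have hc1 : A < c := lt_of_le_of_ne hcmem.1 (by
    intro h; rw [← h] at hQcη; exact absurd hQA (not_lt.mpr hQcη.le))
  have hc2 : c < B := lt_of_le_of_ne hcmem.2 (by
    intro h; rw [h] at hQcη; exact absurd hQB (not_lt.mpr hQcη.le))
  have hderiv0 : deriv Q c = 0 := (hcmin.isLocalMin (Icc_mem_nhds hc1 hc2)).deriv_eq_zero
  have hWc : W c = θ * P c := by simp only [hWdef, hderiv0, zero_add]
  -- P c is small
  have hPc : dmin * P c < dmin * (η / dmax) := by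
    calc dmin * P c ≤ Q c := hPQ1 c
    _ ≤ Q z := hQcz
    _ < η * dmin / dmax := hcon
    _ = dmin * (η / dmax) := by ring
  have hPcs : P c < η / dmax := lt_of_mul_lt_mul_left hPc hdmin.le
  rcases lt_trichotomy θ 0 with hθ | hθ | hθ
  · -- θ < 0 : work on the left of c
    obtain ⟨a, hac, hQa, hain⟩ := aux_level_left Q hQd.continuous hQcη
      ⟨min R1 c, min_le_right _ _, (hR1 _ (min_le_left _ _)).le⟩
    have hda : deriv Q a ≤ 0 := aux_deriv_right_nonpos Q (hQd a) hac
      (fun x hx => by rw [hQa]; exact (hain x hx).le)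
    have hmono : AntitoneOn W (Set.Icc a c) := by
      apply antitoneOn_of_deriv_nonpos (convex_Icc a c) (hWd.continuous.continuousOn)
        (hWd.differentiableOn)
      intro x hx
      rw [interior_Icc] at hx
      exact hder x (hain x ⟨hx.1, hx.2.le⟩).le
    have hWac : W c ≤ W a :=
      hmono (Set.mem_Icc.mpr ⟨le_refl a, hac.le⟩) (Set.mem_Icc.mpr ⟨hac.le, le_refl c⟩) hac.le
    have h1 : θ * P c ≤ θ * P a := by
      have : W a ≤ θ * P a := by simp only [hWdef]; linarith
      linarith [hWc ▸ hWac]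
    have hPac : P a ≤ P c := (mul_le_mul_left_of_neg hθ).mp h1
    have h2 : η ≤ dmax * P a := hQa ▸ hPQ2 a
    have h3 : dmax * P a ≤ dmax * P c := mul_le_mul_of_nonneg_left hPac hdmax0.le
    have h4 : dmax * P c < η := by
      have := (lt_div_iff₀ hdmax0).mp hPcs
      linarith [mul_comm (P c) dmax]
    linarith
  · -- θ = 0
    obtain ⟨a, hac, hQa, hain⟩ := aux_level_left Q hQd.continuous hQcη
      ⟨min R1 c, min_le_right _ _, (hR1 _ (min_le_left _ _)).le⟩
    have hmono : AntitoneOn W (Set.Icc a c) := by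
      apply antitoneOn_of_deriv_nonpos (convex_Icc a c) (hWd.continuous.continuousOn)
        (hWd.differentiableOn)
      intro x hx
      rw [interior_Icc] at hx
      exact hder x (hain x ⟨hx.1, hx.2.le⟩).le
    have hQmono : MonotoneOn Q (Set.Icc a c) := by
      apply monotoneOn_of_deriv_nonneg (convex_Icc a c) (hQd.continuous.continuousOn)
        (hQd.differentiableOn)
      intro x hx
      rw [interior_Icc] at hx
      have hWx : W c ≤ W x := hmono (Set.mem_Icc.mpr ⟨hx.1.le, hx.2.le⟩)
        (Set.mem_Icc.mpr ⟨hac.le, le_refl c⟩) hx.2.le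
      have : W x = deriv Q x := by simp [hWdef, hθ]
      rw [this] at hWx
      rw [hWc, hθ] at hWx
      linarith
    have : Q a ≤ Q c := hQmono (Set.mem_Icc.mpr ⟨le_refl a, hac.le⟩)
      (Set.mem_Icc.mpr ⟨hac.le, le_refl c⟩) hac.le
    rw [hQa] at this; linarith
  · -- θ > 0 : work on the right of c
    obtain ⟨b, hcb, hQb, hbin⟩ := aux_level_right Q hQd.continuous hQcη
      ⟨max R2 c, le_max_right _ _, (hR2 _ (le_max_left _ _)).le⟩
    have hdb : 0 ≤ deriv Q b := aux_deriv_left_nonneg Q (hQd b) hcb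
      (fun x hx => by rw [hQb]; exact (hbin x hx).le)
    have hmono : AntitoneOn W (Set.Icc c b) := by
      apply antitoneOn_of_deriv_nonpos (convex_Icc c b) (hWd.continuous.continuousOn)
        (hWd.differentiableOn)
      intro x hx
      rw [interior_Icc] at hx
      exact hder x (hbin x ⟨hx.1.le, hx.2⟩).le
    have hWcb : W b ≤ W c :=
      hmono (Set.mem_Icc.mpr ⟨le_refl c, hcb.le⟩) (Set.mem_Icc.mpr ⟨hcb.le, le_refl b⟩) hcb.le
    have h1 : θ * P b ≤ θ * P c := by
      have : θ * P b ≤ W b := by simp only [hWdef]; linarith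
      linarith [hWc ▸ hWcb]
    have hPbc : P b ≤ P c := le_of_mul_le_mul_left h1 hθ
    have h2 : η ≤ dmax * P b := hQb ▸ hPQ2 b
    have h3 : dmax * P b ≤ dmax * P c := mul_le_mul_of_nonneg_left hPbc hdmax0.le
    have h4 : dmax * P c < η := by
      have := (lt_div_iff₀ hdmax0).mp hPcs
      linarith [mul_comm (P c) dmax]
    linarith

lemma aux_upbar (Q P : ℝ → ℝ) (θ H dmin dmax Lb Lt Mb Mt : ℝ)
    (hdmin : 0 < dmin) (hmm : dmin ≤ dmax) (hH : 0 ≤ H)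
    (hQd : Differentiable ℝ Q)
    (hWd : Differentiable ℝ (fun x => deriv Q x + θ * P x))
    (hPQ1 : ∀ x, dmin * P x ≤ Q x) (hPQ2 : ∀ x, Q x ≤ dmax * P x)
    (hder : ∀ x, H ≤ Q x → 0 ≤ deriv (fun x => deriv Q x + θ * P x) x)
    (hQbot : Tendsto Q atBot (nhds Lb)) (hQtop : Tendsto Q atTop (nhds Lt))
    (hPbot : Tendsto P atBot (nhds Mb)) (hPtop : Tendsto P atTop (nhds Mt))
    (hLb : Lb ≤ H) (hLt : Lt ≤ H)
    (z : ℝ) : Q z ≤ H * dmax / dmin := by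
  set W : ℝ → ℝ := fun x => deriv Q x + θ * P x with hWdef
  by_contra hcon
  push_neg at hcon
  have hdmax0 : 0 < dmax := lt_of_lt_of_le hdmin hmm
  have hl2 : H ≤ H * dmax / dmin := by
    rw [le_div_iff₀ hdmin]; nlinarith
  have hQzH : H < Q z := lt_of_le_of_lt hl2 hcon
  obtain ⟨R1, hR1⟩ := eventually_atBot.mp
    (hQbot.eventually (eventually_lt_nhds (lt_of_le_of_lt hLb hQzH)))
  obtain ⟨R2, hR2⟩ := eventually_atTop.mp
    (hQtop.eventually (eventually_lt_nhds (lt_of_le_of_lt hLt hQzH)))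
  set A := min R1 z - 1 with hA
  set B := max R2 z + 1 with hB
  have hAz : A < z := by
    have := min_le_right R1 z; simp only [hA]; linarith
  have hzB : z < B := by
    have := le_max_right R2 z; simp only [hB]; linarith
  have hQA : Q A < Q z := hR1 A (by have := min_le_left R1 z; simp only [hA]; linarith)
  have hQB : Q B < Q z := hR2 B (by have := le_max_left R2 z; simp only [hB]; linarith)
  obtain ⟨c, hcmem, hcmax⟩ := isCompact_Icc.exists_isMaxOn
    (Set.nonempty_Icc.mpr (hAz.le.trans hzB.le)) (hQd.continuous.continuousOn (s := Set.Icc A B))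
  have hQcz : Q z ≤ Q c := isMaxOn_iff.mp hcmax z (Set.mem_Icc.mpr ⟨hAz.le, hzB.le⟩)
  have hQc : H * dmax / dmin < Q c := lt_of_lt_of_le hcon hQcz
  have hQcH : H < Q c := lt_of_le_of_lt hl2 hQc
  have hc1 : A < c := lt_of_le_of_ne hcmem.1 (by
    intro h; rw [← h] at hQcz; exact absurd hQA (not_lt.mpr hQcz))
  have hc2 : c < B := lt_of_le_of_ne hcmem.2 (by
    intro h; rw [h] at hQcz; exact absurd hQB (not_lt.mpr hQcz))
  have hderiv0 : deriv Q c = 0 := (hcmax.isLocalMax (Icc_mem_nhds hc1 hc2)).deriv_eq_zero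
  have hWc : W c = θ * P c := by simp only [hWdef, hderiv0, zero_add]
  have hPcbig : H / dmin < P c := by
    have h := lt_of_lt_of_le hQc (hPQ2 c)
    rw [div_lt_iff₀ hdmin]
    nlinarith [(div_lt_iff₀ hdmin).mp h]
  have hPcH : H < dmin * P c := by
    have := (div_lt_iff₀ hdmin).mp hPcbig
    linarith [mul_comm (P c) dmin]
  rcases lt_trichotomy θ 0 with hθ | hθ | hθ
  · -- θ < 0 : left side
    by_cases hS : ∃ x, x ≤ c ∧ Q x ≤ H
    · obtain ⟨x0, hx0c, hx0⟩ := hS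
      obtain ⟨a, hac, hQa', hain'⟩ := aux_level_left (fun x => -Q x)
        (hQd.continuous.neg) (c := c) (η := -H) (by simpa using hQcH)
        ⟨x0, hx0c, by simpa using hx0⟩
      have hQa : Q a = H := by have := hQa'; simp at this; linarith
      have hain : ∀ x ∈ Set.Ioc a c, H < Q x := by
        intro x hx; have := hain' x hx; simp at this; linarith
      have hda : 0 ≤ deriv Q a := aux_deriv_right_nonneg Q (hQd a) hac
        (fun x hx => by rw [hQa]; exact (hain x hx).le)
      have hmono : MonotoneOn W (Set.Icc a c) := by
        apply monotoneOn_of_deriv_nonneg (convex_Icc a c) (hWd.continuous.continuousOn)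
          (hWd.differentiableOn)
        intro x hx
        rw [interior_Icc] at hx
        exact hder x (hain x ⟨hx.1, hx.2.le⟩).le
      have hWac : W a ≤ W c :=
        hmono (Set.mem_Icc.mpr ⟨le_refl a, hac.le⟩) (Set.mem_Icc.mpr ⟨hac.le, le_refl c⟩) hac.le
      have h1 : θ * P a ≤ θ * P c := by
        have : θ * P a ≤ W a := by simp only [hWdef]; linarith
        linarith [hWc ▸ hWac]
      have hPca : P c ≤ P a := (mul_le_mul_left_of_neg hθ).mp h1
      have h2 : dmin * P a ≤ H := hQa ▸ hPQ1 a
      have h3 : dmin * P c ≤ dmin * P a := mul_le_mul_of_nonneg_left hPca hdmin.le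
      linarith
    · push_neg at hS
      have hmono : MonotoneOn W (Set.Iic c) := by
        apply monotoneOn_of_deriv_nonneg (convex_Iic c) (hWd.continuous.continuousOn)
          (hWd.differentiableOn)
        intro x hx
        rw [interior_Iic] at hx
        exact hder x (hS x (le_of_lt hx)).le
      have t1 : Tendsto (fun n : ℕ => ((n : ℝ) + 1)) atTop atTop :=
        tendsto_atTop_add_const_right _ 1 tendsto_natCast_atTop_atTop
      have t1' : Tendsto (fun n : ℕ => ((n : ℝ) + 2)) atTop atTop :=
        tendsto_atTop_add_const_right _ 2 tendsto_natCast_atTop_atTop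
      have t3 : Tendsto (fun n : ℕ => c - ((n : ℝ) + 1)) atTop atBot := by
        simpa [sub_eq_add_neg] using
          tendsto_atBot_add_const_left atTop c (tendsto_neg_atTop_atBot.comp t1)
      have t3' : Tendsto (fun n : ℕ => c - ((n : ℝ) + 2)) atTop atBot := by
        simpa [sub_eq_add_neg] using
          tendsto_atBot_add_const_left atTop c (tendsto_neg_atTop_atBot.comp t1')
      have hseq : ∀ n : ℕ, ∃ x ∈ Set.Ioo (c - ((n : ℝ) + 2)) (c - ((n : ℝ) + 1)),
          deriv Q x = (Q (c - ((n : ℝ) + 1)) - Q (c - ((n : ℝ) + 2)))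
            / ((c - ((n : ℝ) + 1)) - (c - ((n : ℝ) + 2))) := fun n =>
        exists_deriv_eq_slope Q (by linarith) (hQd.continuous.continuousOn)
          (hQd.differentiableOn)
      choose g hg1 hg2 using hseq
      have hgle : ∀ n : ℕ, g n ≤ c - ((n : ℝ) + 1) := fun n => (hg1 n).2.le
      have hgc : ∀ n, g n ≤ c := fun n =>
        le_trans (hgle n) (by have : (0:ℝ) ≤ (n:ℝ) := Nat.cast_nonneg n; linarith)
      have hgbot : Tendsto g atTop atBot := tendsto_atBot_mono hgle t3
      have hdg : ∀ n, deriv Q (g n) = Q (c - ((n : ℝ) + 1)) - Q (c - ((n : ℝ) + 2)) := by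
        intro n
        rw [hg2 n]
        have e : (c - ((n : ℝ) + 1)) - (c - ((n : ℝ) + 2)) = 1 := by ring
        rw [e, div_one]
      have hWlim : Tendsto (fun n : ℕ => W (g n)) atTop (nhds ((Lb - Lb) + θ * Mb)) := by
        have e : (fun n : ℕ => W (g n)) = fun n : ℕ =>
            (Q (c - ((n : ℝ) + 1)) - Q (c - ((n : ℝ) + 2))) + θ * P (g n) :=
          funext fun n => by simp only [hWdef]; rw [hdg n]
        rw [e]
        exact ((hQbot.comp t3).sub (hQbot.comp t3')).add ((hPbot.comp hgbot).const_mul θ)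
      have hle : (Lb - Lb) + θ * Mb ≤ W c := le_of_tendsto hWlim
        (Eventually.of_forall fun n =>
          hmono (Set.mem_Iic.mpr (hgc n)) (Set.mem_Iic.mpr le_rfl) (hgc n))
      have hPcMb : P c ≤ Mb := (mul_le_mul_left_of_neg hθ).mp (by rw [hWc] at hle; linarith)
      have hMb : dmin * Mb ≤ Lb :=
        le_of_tendsto_of_tendsto' (hPbot.const_mul dmin) hQbot hPQ1
      have : dmin * P c ≤ dmin * Mb := mul_le_mul_of_nonneg_left hPcMb hdmin.le
      linarith
  · -- θ = 0
    by_cases hS : ∃ x, x ≤ c ∧ Q x ≤ H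
    · obtain ⟨x0, hx0c, hx0⟩ := hS
      obtain ⟨a, hac, hQa', hain'⟩ := aux_level_left (fun x => -Q x)
        (hQd.continuous.neg) (c := c) (η := -H) (by simpa using hQcH)
        ⟨x0, hx0c, by simpa using hx0⟩
      have hQa : Q a = H := by have := hQa'; simp at this; linarith
      have hain : ∀ x ∈ Set.Ioc a c, H < Q x := by
        intro x hx; have := hain' x hx; simp at this; linarith
      have hmono : MonotoneOn W (Set.Icc a c) := by
        apply monotoneOn_of_deriv_nonneg (convex_Icc a c) (hWd.continuous.continuousOn)
          (hWd.differentiableOn)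
        intro x hx
        rw [interior_Icc] at hx
        exact hder x (hain x ⟨hx.1, hx.2.le⟩).le
      have hQanti : AntitoneOn Q (Set.Icc a c) := by
        apply antitoneOn_of_deriv_nonpos (convex_Icc a c) (hQd.continuous.continuousOn)
          (hQd.differentiableOn)
        intro x hx
        rw [interior_Icc] at hx
        have hWx : W x ≤ W c := hmono (Set.mem_Icc.mpr ⟨hx.1.le, hx.2.le⟩)
          (Set.mem_Icc.mpr ⟨hac.le, le_refl c⟩) hx.2.le
        have e : W x = deriv Q x := by simp [hWdef, hθ]
        rw [e, hWc, hθ] at hWx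
        linarith
    -- Q c ≤ Q a = H
      have : Q c ≤ Q a := hQanti (Set.mem_Icc.mpr ⟨le_refl a, hac.le⟩)
        (Set.mem_Icc.mpr ⟨hac.le, le_refl c⟩) hac.le
      rw [hQa] at this; linarith
    · push_neg at hS
      have hmono : MonotoneOn W (Set.Iic c) := by
        apply monotoneOn_of_deriv_nonneg (convex_Iic c) (hWd.continuous.continuousOn)
          (hWd.differentiableOn)
        intro x hx
        rw [interior_Iic] at hx
        exact hder x (hS x (le_of_lt hx)).le
      have hQanti : AntitoneOn Q (Set.Iic c) := by
        apply antitoneOn_of_deriv_nonpos (convex_Iic c) (hQd.continuous.continuousOn)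
          (hQd.differentiableOn)
        intro x hx
        rw [interior_Iic] at hx
        have hWx : W x ≤ W c := hmono (Set.mem_Iic.mpr (le_of_lt hx))
          (Set.mem_Iic.mpr le_rfl) (le_of_lt hx)
        have e : W x = deriv Q x := by simp [hWdef, hθ]
        rw [e, hWc, hθ] at hWx
        linarith
      have hQcLb : Q c ≤ Lb := ge_of_tendsto hQbot
        (eventually_atBot.mpr ⟨c, fun x hx =>
          hQanti (Set.mem_Iic.mpr hx) (Set.mem_Iic.mpr le_rfl) hx⟩)
      linarith
  · -- θ > 0 : right side
    by_cases hS : ∃ x, c ≤ x ∧ Q x ≤ H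
    · obtain ⟨x0, hx0c, hx0⟩ := hS
      obtain ⟨b, hcb, hQb', hbin'⟩ := aux_level_right (fun x => -Q x)
        (hQd.continuous.neg) (c := c) (η := -H) (by simpa using hQcH)
        ⟨x0, hx0c, by simpa using hx0⟩
      have hQb : Q b = H := by have := hQb'; simp at this; linarith
      have hbin : ∀ x ∈ Set.Ico c b, H < Q x := by
        intro x hx; have := hbin' x hx; simp at this; linarith
      have hdb : deriv Q b ≤ 0 := aux_deriv_left_nonpos Q (hQd b) hcb
        (fun x hx => by rw [hQb]; exact (hbin x hx).le)
      have hmono : MonotoneOn W (Set.Icc c b) := by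
        apply monotoneOn_of_deriv_nonneg (convex_Icc c b) (hWd.continuous.continuousOn)
          (hWd.differentiableOn)
        intro x hx
        rw [interior_Icc] at hx
        exact hder x (hbin x ⟨hx.1.le, hx.2⟩).le
      have hWcb : W c ≤ W b :=
        hmono (Set.mem_Icc.mpr ⟨le_refl c, hcb.le⟩) (Set.mem_Icc.mpr ⟨hcb.le, le_refl b⟩) hcb.le
      have h1 : θ * P c ≤ θ * P b := by
        have : W b ≤ θ * P b := by simp only [hWdef]; linarith
        linarith [hWc ▸ hWcb]
      have hPcb : P c ≤ P b := le_of_mul_le_mul_left h1 hθ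
      have h2 : dmin * P b ≤ H := hQb ▸ hPQ1 b
      have h3 : dmin * P c ≤ dmin * P b := mul_le_mul_of_nonneg_left hPcb hdmin.le
      linarith
    · push_neg at hS
      have hmono : MonotoneOn W (Set.Ici c) := by
        apply monotoneOn_of_deriv_nonneg (convex_Ici c) (hWd.continuous.continuousOn)
          (hWd.differentiableOn)
        intro x hx
        rw [interior_Ici] at hx
        exact hder x (hS x (le_of_lt hx)).le
      have t1 : Tendsto (fun n : ℕ => ((n : ℝ) + 1)) atTop atTop :=
        tendsto_atTop_add_const_right _ 1 tendsto_natCast_atTop_atTop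
      have t1' : Tendsto (fun n : ℕ => ((n : ℝ) + 2)) atTop atTop :=
        tendsto_atTop_add_const_right _ 2 tendsto_natCast_atTop_atTop
      have t3 : Tendsto (fun n : ℕ => c + ((n : ℝ) + 1)) atTop atTop :=
        tendsto_atTop_add_const_left atTop c t1
      have t3' : Tendsto (fun n : ℕ => c + ((n : ℝ) + 2)) atTop atTop :=
        tendsto_atTop_add_const_left atTop c t1'
      have hseq : ∀ n : ℕ, ∃ x ∈ Set.Ioo (c + ((n : ℝ) + 1)) (c + ((n : ℝ) + 2)),
          deriv Q x = (Q (c + ((n : ℝ) + 2)) - Q (c + ((n : ℝ) + 1)))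
            / ((c + ((n : ℝ) + 2)) - (c + ((n : ℝ) + 1))) := fun n =>
        exists_deriv_eq_slope Q (by linarith) (hQd.continuous.continuousOn)
          (hQd.differentiableOn)
      choose g hg1 hg2 using hseq
      have hgge : ∀ n : ℕ, c + ((n : ℝ) + 1) ≤ g n := fun n => (hg1 n).1.le
      have hgc : ∀ n, c ≤ g n := fun n =>
        le_trans (by have : (0:ℝ) ≤ (n:ℝ) := Nat.cast_nonneg n; linarith) (hgge n)
      have hgtop : Tendsto g atTop atTop := tendsto_atTop_mono hgge t3
      have hdg : ∀ n, deriv Q (g n) = Q (c + ((n : ℝ) + 2)) - Q (c + ((n : ℝ) + 1)) := by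
        intro n
        rw [hg2 n]
        have e : (c + ((n : ℝ) + 2)) - (c + ((n : ℝ) + 1)) = 1 := by ring
        rw [e, div_one]
      have hWlim : Tendsto (fun n : ℕ => W (g n)) atTop (nhds ((Lt - Lt) + θ * Mt)) := by
        have e : (fun n : ℕ => W (g n)) = fun n : ℕ =>
            (Q (c + ((n : ℝ) + 2)) - Q (c + ((n : ℝ) + 1))) + θ * P (g n) :=
          funext fun n => by simp only [hWdef]; rw [hdg n]
        rw [e]
        exact ((hQtop.comp t3').sub (hQtop.comp t3)).add ((hPtop.comp hgtop).const_mul θ)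
      have hle : W c ≤ (Lt - Lt) + θ * Mt := ge_of_tendsto hWlim
        (Eventually.of_forall fun n =>
          hmono (Set.mem_Ici.mpr le_rfl) (Set.mem_Ici.mpr (hgc n)) (hgc n))
      have hPcMt : P c ≤ Mt := le_of_mul_le_mul_left (by rw [hWc] at hle; linarith) hθ
      have hMt : dmin * Mt ≤ Lt :=
        le_of_tendsto_of_tendsto' (hPtop.const_mul dmin) hQtop hPQ1
      have : dmin * P c ≤ dmin * Mt := mul_le_mul_of_nonneg_left hPcMt hdmin.le
      linarith

set_option maxHeartbeats 1000000 in
/-- Maximum principle for `q(x) = d1 α u(x) + d2 β v(x)` for the unscaled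
two-species Lotka-Volterra system under the bistable condition [BiS]. -/
theorem lv_unscaled_max_principle_q
    (d1 d2 σ1 σ2 c11 c12 c21 c22 θ α β : ℝ)
    (hd1 : 0 < d1) (hd2 : 0 < d2) (hσ1 : 0 < σ1) (hσ2 : 0 < σ2)
    (hc11 : 0 < c11) (hc12 : 0 < c12) (hc21 : 0 < c21) (hc22 : 0 < c22)
    (hBiS1 : σ1 / c11 > σ2 / c21) (hBiS2 : σ2 / c22 > σ1 / c12)
    (hα : 0 < α) (hβ : 0 < β)
    (u v : ℝ → ℝ)
    (hu : ContDiff ℝ 2 u) (hv : ContDiff ℝ 2 v)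
    (hu0 : ∀ x, 0 ≤ u x) (hv0 : ∀ x, 0 ≤ v x)
    (hequ : ∀ x, d1 * deriv (deriv u) x + θ * deriv u x
      + u x * (σ1 - c11 * u x - c12 * v x) = 0)
    (heqv : ∀ x, d2 * deriv (deriv v) x + θ * deriv v x
      + v x * (σ2 - c21 * u x - c22 * v x) = 0)
    (huM : Tendsto u atBot (nhds (σ1 / c11))) (hvM : Tendsto v atBot (nhds 0))
    (huP : Tendsto u atTop (nhds 0)) (hvP : Tendsto v atTop (nhds (σ2 / c22))) :
    ∀ x : ℝ,
      min (α * σ2 / (c21 * d2)) (β * σ1 / (c12 * d1)) * min (d1 ^ 2) (d2 ^ 2)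
        ≤ d1 * α * u x + d2 * β * v x ∧
      d1 * α * u x + d2 * β * v x
        ≤ max (α * σ1 / (c11 * d2)) (β * σ2 / (c22 * d1)) * max (d1 ^ 2) (d2 ^ 2) := by
  have hud : Differentiable ℝ u := hu.differentiable (by norm_num)
  have hvd : Differentiable ℝ v := hv.differentiable (by norm_num)
  have hu2 : ContDiff ℝ ((1:ℕ∞)+1) u := by exact_mod_cast hu
  have hv2 : ContDiff ℝ ((1:ℕ∞)+1) v := by exact_mod_cast hv
  have hud' : Differentiable ℝ (deriv u) :=
    ((contDiff_succ_iff_deriv.mp hu2).2.2).differentiable (by norm_num)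
  have hvd' : Differentiable ℝ (deriv v) :=
    ((contDiff_succ_iff_deriv.mp hv2).2.2).differentiable (by norm_num)
  set Q : ℝ → ℝ := fun x => d1 * α * u x + d2 * β * v x with hQdef
  set P : ℝ → ℝ := fun x => α * u x + β * v x with hPdef
  have hQd : Differentiable ℝ Q := (hud.const_mul (d1*α)).add (hvd.const_mul (d2*β))
  have hPd : Differentiable ℝ P := (hud.const_mul α).add (hvd.const_mul β)
  have hQderiv : deriv Q = fun x => d1 * α * deriv u x + d2 * β * deriv v x := by
    funext x
    rw [hQdef]
    rw [deriv_fun_add ((hud x).const_mul _) ((hvd x).const_mul _),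
      deriv_const_mul _ (hud x), deriv_const_mul _ (hvd x)]
  have hWd : Differentiable ℝ (fun x => deriv Q x + θ * P x) := by
    simp only [hQderiv]
    exact ((hud'.const_mul _).add (hvd'.const_mul _)).add (hPd.const_mul θ)
  have hWderiv : ∀ x, deriv (fun x => deriv Q x + θ * P x) x
      = -(α * (u x * (σ1 - c11 * u x - c12 * v x))
          + β * (v x * (σ2 - c21 * u x - c22 * v x))) := by
    intro x
    have e1 : (fun x => deriv Q x + θ * P x) = fun y =>
        (d1 * α * deriv u y + d2 * β * deriv v y) + (θ * α * u y + θ * β * v y) := by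
      funext y; simp only [hQderiv, hPdef]; ring
    rw [e1]
    have h : HasDerivAt (fun y =>
        (d1 * α * deriv u y + d2 * β * deriv v y) + (θ * α * u y + θ * β * v y))
        ((d1 * α * deriv (deriv u) x + d2 * β * deriv (deriv v) x)
          + (θ * α * deriv u x + θ * β * deriv v x)) x :=
      ((((hud' x).hasDerivAt.const_mul (d1*α)).add
        ((hvd' x).hasDerivAt.const_mul (d2*β))).add
        (((hud x).hasDerivAt.const_mul (θ*α)).add
        ((hvd x).hasDerivAt.const_mul (θ*β))))
    rw [h.deriv]
    linear_combination α * (hequ x) + β * (heqv x)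
  -- the constants
  obtain ⟨η, hηdef⟩ : ∃ η : ℝ, η = min (d1*α*σ2/c21) (d2*β*σ1/c12) := ⟨_, rfl⟩
  obtain ⟨Hc, hHdef⟩ : ∃ Hc : ℝ, Hc = max (d1*α*σ1/c11) (d2*β*σ2/c22) := ⟨_, rfl⟩
  have hη0 : 0 < η := by rw [hηdef]; exact lt_min (by positivity) (by positivity)
  have hHc0 : 0 < Hc := by
    rw [hHdef]; exact lt_of_lt_of_le (by positivity) (le_max_left _ _)
  have hbis1 : d1*α*σ2/c21 < d1*α*σ1/c11 := by
    rw [div_lt_div_iff₀ hc21 hc11]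
    have := (div_lt_div_iff₀ hc21 hc11).mp hBiS1
    nlinarith [mul_pos hd1 hα]
  have hbis2 : d2*β*σ1/c12 < d2*β*σ2/c22 := by
    rw [div_lt_div_iff₀ hc12 hc22]
    have := (div_lt_div_iff₀ hc12 hc22).mp hBiS2
    nlinarith [mul_pos hd2 hβ]
  have hη1 : η ≤ d1*α*σ1/c11 := hηdef ▸ le_trans (min_le_left _ _) hbis1.le
  have hη2 : η ≤ d2*β*σ1/c12 := hηdef ▸ min_le_right _ _
  have hη3 : η ≤ d1*α*σ2/c21 := hηdef ▸ min_le_left _ _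
  have hη4 : η ≤ d2*β*σ2/c22 := hηdef ▸ le_trans (min_le_right _ _) hbis2.le
  have hH1 : d1*α*σ1/c11 ≤ Hc := hHdef ▸ le_max_left _ _
  have hH2 : d2*β*σ2/c22 ≤ Hc := hHdef ▸ le_max_right _ _
  have hH3 : d1*α*σ2/c21 ≤ Hc := hbis1.le.trans hH1
  have hH4 : d2*β*σ1/c12 ≤ Hc := hbis2.le.trans hH2
  -- sign conditions
  have hderlow : ∀ x, Q x ≤ η → deriv (fun x => deriv Q x + θ * P x) x ≤ 0 := by
    intro x hx
    rw [hWderiv x]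
    simp only [hQdef] at hx
    have hF : 0 ≤ σ1 - c11 * u x - c12 * v x := by
      have e1 : η * c11 ≤ d1*α*σ1 := (le_div_iff₀ hc11).mp hη1
      have e2 : η * c12 ≤ d2*β*σ1 := (le_div_iff₀ hc12).mp hη2
      have key : η * (c11 * u x + c12 * v x) ≤ η * σ1 := by
        have m1 := mul_le_mul_of_nonneg_right e1 (hu0 x)
        have m2 := mul_le_mul_of_nonneg_right e2 (hv0 x)
        have m3 := mul_le_mul_of_nonneg_left hx hσ1.le
        linarith
      nlinarith [key, hη0]
    have hG : 0 ≤ σ2 - c21 * u x - c22 * v x := by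
      have e1 : η * c21 ≤ d1*α*σ2 := (le_div_iff₀ hc21).mp hη3
      have e2 : η * c22 ≤ d2*β*σ2 := (le_div_iff₀ hc22).mp hη4
      have key : η * (c21 * u x + c22 * v x) ≤ η * σ2 := by
        have m1 := mul_le_mul_of_nonneg_right e1 (hu0 x)
        have m2 := mul_le_mul_of_nonneg_right e2 (hv0 x)
        have m3 := mul_le_mul_of_nonneg_left hx hσ2.le
        linarith
      nlinarith [key, hη0]
    linarith [mul_nonneg hα.le (mul_nonneg (hu0 x) hF),
      mul_nonneg hβ.le (mul_nonneg (hv0 x) hG)]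
  have hderup : ∀ x, Hc ≤ Q x → 0 ≤ deriv (fun x => deriv Q x + θ * P x) x := by
    intro x hx
    rw [hWderiv x]
    simp only [hQdef] at hx
    have hF : σ1 - c11 * u x - c12 * v x ≤ 0 := by
      have e1 : d1*α*σ1 ≤ Hc * c11 := (div_le_iff₀ hc11).mp hH1
      have e2 : d2*β*σ1 ≤ Hc * c12 := (div_le_iff₀ hc12).mp hH4
      have key : Hc * σ1 ≤ Hc * (c11 * u x + c12 * v x) := by
        have m1 := mul_le_mul_of_nonneg_right e1 (hu0 x)
        have m2 := mul_le_mul_of_nonneg_right e2 (hv0 x)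
        have m3 := mul_le_mul_of_nonneg_left hx hσ1.le
        linarith
      nlinarith [key, hHc0]
    have hG : σ2 - c21 * u x - c22 * v x ≤ 0 := by
      have e1 : d1*α*σ2 ≤ Hc * c21 := (div_le_iff₀ hc21).mp hH3
      have e2 : d2*β*σ2 ≤ Hc * c22 := (div_le_iff₀ hc22).mp hH2
      have key : Hc * σ2 ≤ Hc * (c21 * u x + c22 * v x) := by
        have m1 := mul_le_mul_of_nonneg_right e1 (hu0 x)
        have m2 := mul_le_mul_of_nonneg_right e2 (hv0 x)
        have m3 := mul_le_mul_of_nonneg_left hx hσ2.le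
        linarith
      nlinarith [key, hHc0]
    linarith [mul_nonpos_of_nonneg_of_nonpos (mul_nonneg hα.le (hu0 x)) hF,
      mul_nonpos_of_nonneg_of_nonpos (mul_nonneg hβ.le (hv0 x)) hG]
  -- comparison between P and Q
  have hPQ1 : ∀ x, min d1 d2 * P x ≤ Q x := by
    intro x
    simp only [hPdef, hQdef]
    rcases le_total d1 d2 with h | h
    · rw [min_eq_left h]
      nlinarith [mul_nonneg hβ.le (hv0 x)]
    · rw [min_eq_right h]
      nlinarith [mul_nonneg hα.le (hu0 x)]
  have hPQ2 : ∀ x, Q x ≤ max d1 d2 * P x := by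
    intro x
    simp only [hPdef, hQdef]
    rcases le_total d1 d2 with h | h
    · rw [max_eq_right h]
      nlinarith [mul_nonneg hα.le (hu0 x)]
    · rw [max_eq_left h]
      nlinarith [mul_nonneg hβ.le (hv0 x)]
  have hdmn : 0 < min d1 d2 := lt_min hd1 hd2
  -- limits
  have hQbot : Tendsto Q atBot (nhds (d1*α*σ1/c11)) := by
    rw [show d1*α*σ1/c11 = d1*α*(σ1/c11) + d2*β*0 by ring]
    exact (huM.const_mul (d1*α)).add (hvM.const_mul (d2*β))
  have hQtop : Tendsto Q atTop (nhds (d2*β*σ2/c22)) := by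
    rw [show d2*β*σ2/c22 = d1*α*0 + d2*β*(σ2/c22) by ring]
    exact (huP.const_mul (d1*α)).add (hvP.const_mul (d2*β))
  have hPbot : Tendsto P atBot (nhds (α*(σ1/c11) + β*0)) :=
    (huM.const_mul α).add (hvM.const_mul β)
  have hPtop : Tendsto P atTop (nhds (α*0 + β*(σ2/c22))) :=
    (huP.const_mul α).add (hvP.const_mul β)
  have hblow : ∀ᶠ x in atBot, η < Q x :=
    hQbot.eventually (eventually_gt_nhds (lt_of_le_of_lt hη3 hbis1))
  have htlow : ∀ᶠ x in atTop, η < Q x :=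
    hQtop.eventually (eventually_gt_nhds (lt_of_le_of_lt hη2 hbis2))
  have hd1' : d1 ≠ 0 := hd1.ne'
  have hd2' : d2 ≠ 0 := hd2.ne'
  intro z
  constructor
  · have hlow := aux_lowbar Q P θ η (min d1 d2) (max d1 d2) hdmn min_le_max hη0
      hQd hWd hPQ1 hPQ2 hderlow hblow htlow z
    refine le_trans (le_of_eq ?_) hlow
    have e1 : d1*α*σ2/c21 = (α*σ2/(c21*d2))*(d1*d2) := by field_simp
    have e2 : d2*β*σ1/c12 = (β*σ1/(c12*d1))*(d1*d2) := by field_simp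
    rw [hηdef, e1, e2, ← min_mul_of_nonneg _ _ (le_of_lt (mul_pos hd1 hd2))]
    rcases le_total d1 d2 with h | h
    · rw [min_eq_left h, max_eq_right h,
        min_eq_left (by nlinarith : d1^2 ≤ d2^2)]
      field_simp
    · rw [min_eq_right h, max_eq_left h,
        min_eq_right (by nlinarith : d2^2 ≤ d1^2)]
      field_simp
  · have hup := aux_upbar Q P θ Hc (min d1 d2) (max d1 d2)
      (d1*α*σ1/c11) (d2*β*σ2/c22) (α*(σ1/c11) + β*0) (α*0 + β*(σ2/c22))
      hdmn min_le_max hHc0.le hQd hWd hPQ1 hPQ2 hderup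
      hQbot hQtop hPbot hPtop hH1 hH2 z
    refine le_trans hup (le_of_eq ?_)
    have e1 : d1*α*σ1/c11 = (α*σ1/(c11*d2))*(d1*d2) := by field_simp
    have e2 : d2*β*σ2/c22 = (β*σ2/(c22*d1))*(d1*d2) := by field_simp
    rw [hHdef, e1, e2, ← max_mul_of_nonneg _ _ (le_of_lt (mul_pos hd1 hd2))]
    rcases le_total d1 d2 with h | h
    · rw [min_eq_left h, max_eq_right h,
        max_eq_right (by nlinarith : d1^2 ≤ d2^2)]
      field_simp
    · rw [min_eq_right h, max_eq_left h,
        max_eq_left (by nlinarith : d2^2 ≤ d1^2)]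
      field_simp
end
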